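/- arXiv:1707.05447 — 8 statements merged into one kernel-verified Lean document; each statement's English description precedes it below -/
import Mathlib

section
/- Let C be a monoidal category and B an object carrying a bimonad datum: a monoid structure (m, η) and a comonoid structure (Δ, ε) such that ε∘m = ε⊗ε, Δ∘η = η⊗η and ε∘η = id_𝟙. Let F be an object of C, ψ : B⊗F → F⊗B a monad distributive law (ψ∘(m⊗id_F) = (id_F⊗m)∘(ψ⊗id_B)∘(id_B⊗ψ), ψ∘(η⊗id_F) = id_F⊗η) and φ : F⊗B → B⊗F a comonad distributive law ((id_B⊗φ)∘(φ⊗id_B)∘(id_F⊗Δ) = (Δ⊗id_F)∘φ, (ε⊗id_F)∘φ = id_F⊗ε). Then ν := (id_F⊗ε)∘ψ makes F a left B-module and ϱ := φ∘(id_F⊗η) makes F a left B-comodule. (In particular, in any biwreath F over a bimonad B, the 1-cell F is a left B-module and a left B-comodule.) -/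
open CategoryTheory MonoidalCategory

/-- A bimonad datum on an object `B` of a monoidal category: a monoid structure `(m, η)`,
a comonoid structure `(Δ, ε)`, and the compatibilities `ε∘m = ε⊗ε`, `Δ∘η = η⊗η`,
`ε∘η = id`. -/
def BimonadDatum {C : Type*} [Category C] [MonoidalCategory C] (B : C)
    (m : B ⊗ B ⟶ B) (η : 𝟙_ C ⟶ B) (Δ : B ⟶ B ⊗ B) (ε : B ⟶ 𝟙_ C) : Prop :=
  (m ▷ B) ≫ m = (α_ B B B).hom ≫ (B ◁ m) ≫ m ∧
  (λ_ B).inv ≫ (η ▷ B) ≫ m = 𝟙 B ∧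
  (ρ_ B).inv ≫ (B ◁ η) ≫ m = 𝟙 B ∧
  Δ ≫ (Δ ▷ B) = Δ ≫ (B ◁ Δ) ≫ (α_ B B B).inv ∧
  Δ ≫ (ε ▷ B) ≫ (λ_ B).hom = 𝟙 B ∧
  Δ ≫ (B ◁ ε) ≫ (ρ_ B).hom = 𝟙 B ∧
  m ≫ ε = (ε ⊗ₘ ε) ≫ (λ_ (𝟙_ C)).hom ∧
  η ≫ Δ = (λ_ (𝟙_ C)).inv ≫ (η ⊗ₘ η) ∧
  η ≫ ε = 𝟙 (𝟙_ C)

/-!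
Composing the monad distributive law `ψ` with the counit `ε` on its `B`-output erases that
strand: since `ε` is multiplicative, the multiplicativity law of `ψ` becomes associativity of
`ν`, once `ε` on one strand is slid past `ψ` on the others by the interchange law.
Dually, feeding the unit `η` into the comonad distributive law `φ` and using
`Δ ∘ η = η ⊗ η` turns the comultiplicativity law of `φ` into coassociativity of `ϱ`.
-/

section
variable {C : Type*} [Category C] [MonoidalCategory C]

theorem whiskerRight_whiskerLeft_rightUnitor_hom {X Y B : C} (f : X ⟶ Y) (e : B ⟶ 𝟙_ C) :
    f ▷ B ≫ Y ◁ e ≫ (ρ_ Y).hom = X ◁ e ≫ (ρ_ X).hom ≫ f := by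
  rw [← whisker_exchange_assoc, rightUnitor_naturality]

theorem rightUnitor_inv_whiskerLeft_whiskerRight {X Y B : C} (f : X ⟶ Y) (u : 𝟙_ C ⟶ B) :
    (ρ_ X).inv ≫ X ◁ u ≫ f ▷ B = f ≫ (ρ_ Y).inv ≫ Y ◁ u := by
  rw [whisker_exchange, rightUnitor_inv_naturality_assoc]

variable {B F : C}

theorem monadDistribLaw_counit_action_assoc {m : B ⊗ B ⟶ B} {ε : B ⟶ 𝟙_ C}
    {ψ : B ⊗ F ⟶ F ⊗ B}
    (hψm : (m ▷ F) ≫ ψ =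
      (α_ B B F).hom ≫ (B ◁ ψ) ≫ (α_ B F B).inv ≫ (ψ ▷ B) ≫ (α_ F B B).hom ≫ (F ◁ m))
    (hεm : m ≫ ε = (ε ⊗ₘ ε) ≫ (λ_ (𝟙_ C)).hom) :
    (m ▷ F) ≫ ψ ≫ (F ◁ ε) ≫ (ρ_ F).hom =
      (α_ B B F).hom ≫ (B ◁ (ψ ≫ (F ◁ ε) ≫ (ρ_ F).hom)) ≫ ψ ≫ (F ◁ ε) ≫ (ρ_ F).hom := by
  calc (m ▷ F) ≫ ψ ≫ (F ◁ ε) ≫ (ρ_ F).hom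
      = (α_ B B F).hom ≫ (B ◁ ψ) ≫ (α_ B F B).inv ≫ (ψ ▷ B) ≫ (α_ F B B).hom ≫
          F ◁ ((ε ⊗ₘ ε) ≫ (λ_ (𝟙_ C)).hom) ≫ (ρ_ F).hom := by
        rw [reassoc_of% hψm, ← hεm, whiskerLeft_comp_assoc]
    _ = (α_ B B F).hom ≫ (B ◁ ψ) ≫ (α_ B F B).inv ≫ (ψ ▷ B) ≫
          (F ◁ ε) ▷ B ≫ (F ⊗ 𝟙_ C) ◁ ε ≫ (ρ_ (F ⊗ 𝟙_ C)).hom ≫ (ρ_ F).hom := by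
        rw [MonoidalCategory.tensorHom_def]; monoidal
    _ = (α_ B B F).hom ≫ (B ◁ ψ) ≫ (α_ B F B).inv ≫ (ψ ▷ B) ≫
          (F ⊗ B) ◁ ε ≫ (ρ_ (F ⊗ B)).hom ≫ (F ◁ ε) ≫ (ρ_ F).hom := by
        rw [reassoc_of% whiskerRight_whiskerLeft_rightUnitor_hom (F ◁ ε) ε]
    _ = (α_ B B F).hom ≫ (B ◁ ψ) ≫ (α_ B F B).inv ≫
          (B ⊗ F) ◁ ε ≫ (ρ_ (B ⊗ F)).hom ≫ ψ ≫ (F ◁ ε) ≫ (ρ_ F).hom := by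
        rw [reassoc_of% whiskerRight_whiskerLeft_rightUnitor_hom ψ ε]
    _ = _ := by monoidal

theorem monadDistribLaw_counit_action_unit {η : 𝟙_ C ⟶ B} {ε : B ⟶ 𝟙_ C}
    {ψ : B ⊗ F ⟶ F ⊗ B} (hψη : (η ▷ F) ≫ ψ = (λ_ F).hom ≫ (ρ_ F).inv ≫ (F ◁ η))
    (hηε : η ≫ ε = 𝟙 (𝟙_ C)) :
    (η ▷ F) ≫ ψ ≫ (F ◁ ε) ≫ (ρ_ F).hom = (λ_ F).hom := by
  rw [reassoc_of% hψη, ← whiskerLeft_comp_assoc, hηε]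
  simp

theorem comonadDistribLaw_unit_coaction_coassoc {Δ : B ⟶ B ⊗ B} {η : 𝟙_ C ⟶ B}
    {φ : F ⊗ B ⟶ B ⊗ F}
    (hφΔ : (F ◁ Δ) ≫ (α_ F B B).inv ≫ (φ ▷ B) ≫ (α_ B F B).hom ≫ (B ◁ φ) ≫
        (α_ B B F).inv = φ ≫ (Δ ▷ F))
    (hηΔ : η ≫ Δ = (λ_ (𝟙_ C)).inv ≫ (η ⊗ₘ η)) :
    ((ρ_ F).inv ≫ (F ◁ η) ≫ φ) ≫ (Δ ▷ F) =
      ((ρ_ F).inv ≫ (F ◁ η) ≫ φ) ≫ (B ◁ ((ρ_ F).inv ≫ (F ◁ η) ≫ φ)) ≫ (α_ B B F).inv := by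
  calc ((ρ_ F).inv ≫ (F ◁ η) ≫ φ) ≫ (Δ ▷ F)
      = (ρ_ F).inv ≫ F ◁ ((λ_ (𝟙_ C)).inv ≫ (η ⊗ₘ η)) ≫ (α_ F B B).inv ≫ (φ ▷ B) ≫
          (α_ B F B).hom ≫ (B ◁ φ) ≫ (α_ B B F).inv := by
        rw [← hηΔ, whiskerLeft_comp_assoc, hφΔ]; simp only [Category.assoc]
    _ = (ρ_ F).inv ≫ (ρ_ (F ⊗ 𝟙_ C)).inv ≫ (F ⊗ 𝟙_ C) ◁ η ≫ (F ◁ η) ▷ B ≫ (φ ▷ B) ≫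
          (α_ B F B).hom ≫ (B ◁ φ) ≫ (α_ B B F).inv := by
        rw [MonoidalCategory.tensorHom_def']; monoidal
    _ = (ρ_ F).inv ≫ (F ◁ η) ≫ (ρ_ (F ⊗ B)).inv ≫ (F ⊗ B) ◁ η ≫ (φ ▷ B) ≫
          (α_ B F B).hom ≫ (B ◁ φ) ≫ (α_ B B F).inv := by
        rw [reassoc_of% rightUnitor_inv_whiskerLeft_whiskerRight (F ◁ η) η]
    _ = (ρ_ F).inv ≫ (F ◁ η) ≫ φ ≫ (ρ_ (B ⊗ F)).inv ≫ (B ⊗ F) ◁ η ≫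
          (α_ B F B).hom ≫ (B ◁ φ) ≫ (α_ B B F).inv := by
        rw [reassoc_of% rightUnitor_inv_whiskerLeft_whiskerRight φ η]
    _ = _ := by monoidal

theorem comonadDistribLaw_unit_coaction_counit {η : 𝟙_ C ⟶ B} {ε : B ⟶ 𝟙_ C}
    {φ : F ⊗ B ⟶ B ⊗ F} (hφε : φ ≫ (ε ▷ F) ≫ (λ_ F).hom = (F ◁ ε) ≫ (ρ_ F).hom)
    (hηε : η ≫ ε = 𝟙 (𝟙_ C)) :
    ((ρ_ F).inv ≫ (F ◁ η) ≫ φ) ≫ (ε ▷ F) ≫ (λ_ F).hom = 𝟙 F := by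
  rw [Category.assoc, Category.assoc, hφε, ← whiskerLeft_comp_assoc, hηε]
  simp

end

/-- For a bimonad datum on `B`, a monad distributive law
`ψ : B ⊗ F ⟶ F ⊗ B` and a comonad distributive law `φ : F ⊗ B ⟶ B ⊗ F`, the morphisms
`ν := (id_F ⊗ ε) ∘ ψ` and `ϱ := φ ∘ (id_F ⊗ η)` make `F` a left `B`-module and a left
`B`-comodule, respectively.  (In particular this holds in any biwreath.) -/
theorem statement2 {C : Type*} [Category C] [MonoidalCategory C]
    (B F : C) (m : B ⊗ B ⟶ B) (η : 𝟙_ C ⟶ B) (Δ : B ⟶ B ⊗ B) (ε : B ⟶ 𝟙_ C)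
    (hB : BimonadDatum B m η Δ ε)
    (ψ : B ⊗ F ⟶ F ⊗ B) (φ : F ⊗ B ⟶ B ⊗ F)
    (hψm : (m ▷ F) ≫ ψ =
      (α_ B B F).hom ≫ (B ◁ ψ) ≫ (α_ B F B).inv ≫ (ψ ▷ B) ≫
        (α_ F B B).hom ≫ (F ◁ m))
    (hψη : (η ▷ F) ≫ ψ = (λ_ F).hom ≫ (ρ_ F).inv ≫ (F ◁ η))
    (hφΔ : (F ◁ Δ) ≫ (α_ F B B).inv ≫ (φ ▷ B) ≫ (α_ B F B).hom ≫ (B ◁ φ) ≫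
        (α_ B B F).inv = φ ≫ (Δ ▷ F))
    (hφε : φ ≫ (ε ▷ F) ≫ (λ_ F).hom = (F ◁ ε) ≫ (ρ_ F).hom) :
    (∀ ν : B ⊗ F ⟶ F, ν = ψ ≫ (F ◁ ε) ≫ (ρ_ F).hom →
      ((m ▷ F) ≫ ν = (α_ B B F).hom ≫ (B ◁ ν) ≫ ν ∧
       (η ▷ F) ≫ ν = (λ_ F).hom)) ∧
    (∀ ϱ : F ⟶ B ⊗ F, ϱ = (ρ_ F).inv ≫ (F ◁ η) ≫ φ →
      (ϱ ≫ (Δ ▷ F) = ϱ ≫ (B ◁ ϱ) ≫ (α_ B B F).inv ∧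
       ϱ ≫ (ε ▷ F) ≫ (λ_ F).hom = 𝟙 F)) := by
  obtain ⟨-, -, -, -, -, -, hεm, hηΔ, hηε⟩ := hB
  refine ⟨?_, ?_⟩
  · rintro ν rfl
    exact ⟨monadDistribLaw_counit_action_assoc hψm hεm,
      monadDistribLaw_counit_action_unit hψη hηε⟩
  · rintro ϱ rfl
    exact ⟨comonadDistribLaw_unit_coaction_coassoc hφΔ hηΔ,
      comonadDistribLaw_unit_coaction_counit hφε hηε⟩
end

section
/- Let B be a bialgebra in a braided monoidal category C with braiding c, and define λ_B := (m⊗id_B)∘(id_B⊗c_{B,B})∘(Δ⊗id_B) : B⊗B → B⊗B. Then: (i) λ_B∘(m⊗id_B) = (id_B⊗m)∘(λ_B⊗id_B)∘(id_B⊗λ_B); (ii) λ_B∘(η⊗id_B) = id_B⊗η; (iii) (id_B⊗λ_B)∘(λ_B⊗id_B)∘(id_B⊗Δ) = (Δ⊗id_B)∘λ_B; (iv) (ε⊗id_B)∘λ_B = id_B⊗ε; and (v) Δ∘m = (id_B⊗m)∘(λ_B⊗id_B)∘(id_B⊗Δ). Consequently every bialgebra in C, equipped with λ_B, is a bimonad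 in the one-object 2-category Ĉ determined by C. -/
open CategoryTheory MonoidalCategory

/-- The middle interchange `(X₁ ⊗ X₂) ⊗ (Y₁ ⊗ Y₂) ⟶ (X₁ ⊗ Y₁) ⊗ (X₂ ⊗ Y₂)`
given by `id ⊗ c ⊗ id` (with the braiding on the two middle factors). -/
def exch {C : Type*} [Category C] [MonoidalCategory C] [BraidedCategory C]
    (X Y Z W : C) : (X ⊗ Y) ⊗ (Z ⊗ W) ⟶ (X ⊗ Z) ⊗ (Y ⊗ W) :=
  (α_ X Y (Z ⊗ W)).hom ≫ (X ◁ (α_ Y Z W).inv) ≫ (X ◁ ((β_ Y Z).hom ▷ W)) ≫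
    (X ◁ (α_ Z Y W).hom) ≫ (α_ X Z (Y ⊗ W)).inv

/-- A bialgebra in a braided monoidal category: a monoid structure `(m, η)`, a comonoid
structure `(Δ, ε)`, and the braided bialgebra compatibilities. -/
def IsBialgebraIn {C : Type*} [Category C] [MonoidalCategory C] [BraidedCategory C]
    (X : C) (m : X ⊗ X ⟶ X) (η : 𝟙_ C ⟶ X) (Δ : X ⟶ X ⊗ X) (ε : X ⟶ 𝟙_ C) : Prop :=
  (m ▷ X) ≫ m = (α_ X X X).hom ≫ (X ◁ m) ≫ m ∧
  (λ_ X).inv ≫ (η ▷ X) ≫ m = 𝟙 X ∧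
  (ρ_ X).inv ≫ (X ◁ η) ≫ m = 𝟙 X ∧
  Δ ≫ (Δ ▷ X) = Δ ≫ (X ◁ Δ) ≫ (α_ X X X).inv ∧
  Δ ≫ (ε ▷ X) ≫ (λ_ X).hom = 𝟙 X ∧
  Δ ≫ (X ◁ ε) ≫ (ρ_ X).hom = 𝟙 X ∧
  m ≫ Δ = (Δ ⊗ₘ Δ) ≫ exch X X X X ≫ (m ⊗ₘ m) ∧
  m ≫ ε = (ε ⊗ₘ ε) ≫ (λ_ (𝟙_ C)).hom ∧
  η ≫ Δ = (λ_ (𝟙_ C)).inv ≫ (η ⊗ₘ η) ∧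
  η ≫ ε = 𝟙 (𝟙_ C)

/-! Writing `λ_B = distribLaw m Δ`, the braided compatibility
`Δ ∘ m = (m ⊗ m) ∘ (id ⊗ c ⊗ id) ∘ (Δ ⊗ Δ)` is literally law (v). For laws (i) and (iii) both
sides are brought to a common string-diagram normal form: `Δ ∘ m` is expanded by the
compatibility, (co)associativity regroups the (co)multiplications, and the crossings are matched
by naturality of the braiding and the hexagon identities. For laws (ii) and (iv), `η` and `ε`
slide through the braiding, which there becomes a unitor. -/

open BraidedCategory

section DistribLaw

variable {C : Type*} [Category C] [MonoidalCategory C] [BraidedCategory C]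

theorem exch_eq_tensorμ (X Y Z W : C) : exch X Y Z W = tensorμ X Y Z W :=
  rfl

variable {B : C}

def distribLaw (m : B ⊗ B ⟶ B) (Δ : B ⟶ B ⊗ B) : B ⊗ B ⟶ B ⊗ B :=
  (Δ ▷ B) ≫ (α_ B B B).hom ≫ (B ◁ (β_ B B).hom) ≫ (α_ B B B).inv ≫ (m ▷ B)

theorem comul_tensorμ_mul_eq_distribLaw (m : B ⊗ B ⟶ B) (Δ : B ⟶ B ⊗ B) :
    (Δ ⊗ₘ Δ) ≫ tensorμ B B B B ≫ (m ⊗ₘ m) =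
      (B ◁ Δ) ≫ (α_ B B B).inv ≫ (distribLaw m Δ ▷ B) ≫ (α_ B B B).hom ≫ (B ◁ m) := by
  rw [tensorHom_def' Δ Δ, MonoidalCategory.tensorHom_def m m, tensorμ, distribLaw]
  monoidal

theorem distribLaw_twice_comp_mul (m : B ⊗ B ⟶ B) (Δ : B ⟶ B ⊗ B) :
    (α_ B B B).hom ≫ (B ◁ distribLaw m Δ) ≫ (α_ B B B).inv ≫ (distribLaw m Δ ▷ B) ≫
        (α_ B B B).hom ≫ (B ◁ m) =
      𝟙 _ ⊗≫ (Δ ▷ B ▷ B) ⊗≫ (B ◁ B ◁ (Δ ▷ B)) ⊗≫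
        (B ◁ ((B ⊗ B) ◁ (β_ B B).hom ≫ (β_ B B).hom ▷ (B ⊗ B))) ⊗≫
        (B ◁ B ◁ ((β_ B B).hom ▷ B)) ⊗≫ (B ◁ (m ▷ (B ⊗ B))) ⊗≫ (m ▷ (B ⊗ B)) ⊗≫
        (B ◁ m) ⊗≫ 𝟙 _ := by
  calc
    _ = 𝟙 _ ⊗≫ (B ◁ distribLaw m Δ ≫ Δ ▷ (B ⊗ B)) ⊗≫ ((B ◁ (β_ B B).hom) ▷ B) ⊗≫
          ((m ▷ B) ▷ B) ⊗≫ (B ◁ m) ⊗≫ 𝟙 _ := by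
      unfold distribLaw; monoidal
    _ = 𝟙 _ ⊗≫ (Δ ▷ B ▷ B) ⊗≫ (B ◁ B ◁ (Δ ▷ B)) ⊗≫ (B ◁ B ◁ B ◁ (β_ B B).hom) ⊗≫
          (B ◁ ((B ◁ m ≫ (β_ B B).hom) ▷ B)) ⊗≫ (m ▷ (B ⊗ B)) ⊗≫ (B ◁ m) ⊗≫ 𝟙 _ := by
      unfold distribLaw; rw [whisker_exchange]; monoidal
    _ = _ := by
      rw [braiding_naturality_right, braiding_tensor_right_hom]; monoidal

theorem mul_whiskerRight_comp_distribLaw {m : B ⊗ B ⟶ B} {Δ : B ⟶ B ⊗ B}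
    (hassoc : (m ▷ B) ≫ m = (α_ B B B).hom ≫ (B ◁ m) ≫ m)
    (hmΔ : m ≫ Δ = (Δ ⊗ₘ Δ) ≫ tensorμ B B B B ≫ (m ⊗ₘ m)) :
    (m ▷ B) ≫ distribLaw m Δ =
      (α_ B B B).hom ≫ (B ◁ distribLaw m Δ) ≫ (α_ B B B).inv ≫ (distribLaw m Δ ▷ B) ≫
        (α_ B B B).hom ≫ (B ◁ m) := by
  rw [distribLaw_twice_comp_mul]
  calc
    _ = 𝟙 _ ⊗≫ ((Δ ⊗ₘ Δ) ≫ tensorμ B B B B ≫ (m ⊗ₘ m)) ▷ B ⊗≫ (B ◁ (β_ B B).hom) ⊗≫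
          (m ▷ B) := by
      rw [← hmΔ, distribLaw]; monoidal
    _ = 𝟙 _ ⊗≫ (Δ ▷ B ▷ B) ⊗≫ (B ◁ B ◁ (Δ ▷ B)) ⊗≫ (B ◁ ((β_ B B).hom ▷ (B ⊗ B))) ⊗≫
          (B ◁ B ◁ (m ▷ B)) ⊗≫ (m ▷ (B ⊗ B) ≫ B ◁ (β_ B B).hom) ⊗≫ (m ▷ B) ⊗≫ 𝟙 _ := by
      rw [tensorHom_def Δ Δ, tensorHom_def' m m, tensorμ]; monoidal
    _ = 𝟙 _ ⊗≫ (Δ ▷ B ▷ B) ⊗≫ (B ◁ B ◁ (Δ ▷ B)) ⊗≫ (B ◁ ((β_ B B).hom ▷ (B ⊗ B))) ⊗≫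
          ((B ⊗ B) ◁ (m ▷ B ≫ (β_ B B).hom)) ⊗≫ (m ▷ (B ⊗ B)) ⊗≫ (m ▷ B) ⊗≫ 𝟙 _ := by
      rw [← whisker_exchange]; monoidal
    _ = 𝟙 _ ⊗≫ (Δ ▷ B ▷ B) ⊗≫ (B ◁ B ◁ (Δ ▷ B)) ⊗≫ (B ◁ ((β_ B B).hom ▷ (B ⊗ B))) ⊗≫
          ((B ⊗ B) ◁ (β_ (B ⊗ B) B).hom) ⊗≫ ((B ⊗ B) ◁ (B ◁ m) ≫ m ▷ (B ⊗ B)) ⊗≫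
          (m ▷ B) ⊗≫ 𝟙 _ := by
      rw [braiding_naturality_left]; monoidal
    _ = 𝟙 _ ⊗≫ (Δ ▷ B ▷ B) ⊗≫ (B ◁ B ◁ (Δ ▷ B)) ⊗≫ (B ◁ ((β_ B B).hom ▷ (B ⊗ B))) ⊗≫
          ((B ⊗ B) ◁ (β_ (B ⊗ B) B).hom) ⊗≫ (m ▷ (B ⊗ B ⊗ B)) ⊗≫
          ((B ⊗ B) ◁ m ≫ m ▷ B) ⊗≫ 𝟙 _ := by
      rw [whisker_exchange]; monoidal
    _ = 𝟙 _ ⊗≫ (Δ ▷ B ▷ B) ⊗≫ (B ◁ B ◁ (Δ ▷ B)) ⊗≫ (B ◁ ((β_ B B).hom ▷ (B ⊗ B))) ⊗≫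
          ((B ⊗ B) ◁ (β_ (B ⊗ B) B).hom) ⊗≫ ((m ▷ B ≫ m) ▷ (B ⊗ B)) ⊗≫ (B ◁ m) ⊗≫ 𝟙 _ := by
      rw [whisker_exchange]; monoidal
    _ = 𝟙 _ ⊗≫ (Δ ▷ B ▷ B) ⊗≫ (B ◁ B ◁ (Δ ▷ B)) ⊗≫
          (B ◁ ((β_ B B).hom ▷ (B ⊗ B) ≫ (B ⊗ B) ◁ (β_ B B).hom)) ⊗≫
          (B ◁ B ◁ ((β_ B B).hom ▷ B)) ⊗≫ (B ◁ (m ▷ (B ⊗ B))) ⊗≫ (m ▷ (B ⊗ B)) ⊗≫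
          (B ◁ m) ⊗≫ 𝟙 _ := by
      rw [hassoc, braiding_tensor_left_hom]; monoidal
    _ = _ := by rw [whisker_exchange]

theorem unit_whiskerRight_comp_distribLaw {m : B ⊗ B ⟶ B} {η : 𝟙_ C ⟶ B} {Δ : B ⟶ B ⊗ B}
    (hη : (λ_ B).inv ≫ (η ▷ B) ≫ m = 𝟙 B) (hηΔ : η ≫ Δ = (λ_ (𝟙_ C)).inv ≫ (η ⊗ₘ η)) :
    (λ_ B).inv ≫ (η ▷ B) ≫ distribLaw m Δ = (ρ_ B).inv ≫ (B ◁ η) := by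
  calc (λ_ B).inv ≫ (η ▷ B) ≫ distribLaw m Δ
      = 𝟙 _ ⊗≫ ((η ≫ Δ) ▷ B) ⊗≫ (B ◁ (β_ B B).hom) ⊗≫ (m ▷ B) := by
        unfold distribLaw; monoidal
    _ = 𝟙 _ ⊗≫ (η ▷ B) ⊗≫ (B ◁ (η ▷ B ≫ (β_ B B).hom)) ⊗≫ (m ▷ B) := by
        rw [hηΔ, MonoidalCategory.tensorHom_def]; monoidal
    _ = 𝟙 _ ⊗≫ (η ▷ B) ⊗≫ ((B ⊗ B) ◁ η ≫ m ▷ B) := by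
        rw [braiding_naturality_left, braiding_tensorUnit_left]; monoidal
    _ = 𝟙 _ ⊗≫ ((λ_ B).inv ≫ η ▷ B ≫ m) ▷ 𝟙_ C ⊗≫ (B ◁ η) := by
        rw [whisker_exchange]; monoidal
    _ = (ρ_ B).inv ≫ (B ◁ η) := by rw [hη]; monoidal

theorem whiskerLeft_comul_comp_distribLaw_twice (m : B ⊗ B ⟶ B) (Δ : B ⟶ B ⊗ B) :
    (B ◁ Δ) ≫ (α_ B B B).inv ≫ (distribLaw m Δ ▷ B) ≫ (α_ B B B).hom ≫
        (B ◁ distribLaw m Δ) =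
      𝟙 _ ⊗≫ (B ◁ Δ) ⊗≫ ((Δ ≫ B ◁ Δ ≫ (α_ B B B).inv) ▷ (B ⊗ B)) ⊗≫
        (B ◁ B ◁ ((β_ B B).hom ▷ B)) ⊗≫ (B ◁ ((β_ B B).hom ▷ (B ⊗ B))) ⊗≫
        ((B ⊗ B) ◁ (B ◁ (β_ B B).hom)) ⊗≫ (m ▷ (B ⊗ B ⊗ B)) ⊗≫ (B ◁ (m ▷ B)) ⊗≫ 𝟙 _ := by
  calc
    _ = 𝟙 _ ⊗≫ (B ◁ Δ) ⊗≫ (Δ ▷ (B ⊗ B)) ⊗≫ (B ◁ ((β_ B B).hom ▷ B)) ⊗≫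
          (m ▷ (B ⊗ B) ≫ B ◁ (Δ ▷ B)) ⊗≫ (B ◁ (B ◁ (β_ B B).hom)) ⊗≫ (B ◁ (m ▷ B)) ⊗≫
          𝟙 _ := by
      unfold distribLaw; monoidal
    _ = 𝟙 _ ⊗≫ (B ◁ Δ) ⊗≫ (Δ ▷ (B ⊗ B)) ⊗≫ (B ◁ (((β_ B B).hom ≫ B ◁ Δ) ▷ B)) ⊗≫
          (m ▷ (B ⊗ B ⊗ B)) ⊗≫ (B ◁ (B ◁ (β_ B B).hom)) ⊗≫ (B ◁ (m ▷ B)) ⊗≫ 𝟙 _ := by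
      rw [← whisker_exchange]; monoidal
    _ = 𝟙 _ ⊗≫ (B ◁ Δ) ⊗≫ (Δ ▷ (B ⊗ B)) ⊗≫ (B ◁ ((Δ ▷ B ≫ (β_ (B ⊗ B) B).hom) ▷ B)) ⊗≫
          (m ▷ (B ⊗ B ⊗ B)) ⊗≫ (B ◁ (B ◁ (β_ B B).hom)) ⊗≫ (B ◁ (m ▷ B)) ⊗≫ 𝟙 _ := by
      rw [← braiding_naturality_left]
    _ = 𝟙 _ ⊗≫ (B ◁ Δ) ⊗≫ ((Δ ≫ B ◁ Δ ≫ (α_ B B B).inv) ▷ (B ⊗ B)) ⊗≫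
          (B ◁ B ◁ ((β_ B B).hom ▷ B)) ⊗≫ (B ◁ ((β_ B B).hom ▷ (B ⊗ B))) ⊗≫
          (m ▷ (B ⊗ B ⊗ B) ≫ B ◁ (B ◁ (β_ B B).hom)) ⊗≫ (B ◁ (m ▷ B)) ⊗≫ 𝟙 _ := by
      rw [braiding_tensor_left_hom]; monoidal
    _ = _ := by rw [← whisker_exchange]; monoidal

theorem distribLaw_comp_comul_whiskerRight {m : B ⊗ B ⟶ B} {Δ : B ⟶ B ⊗ B}
    (hcoassoc : Δ ≫ (Δ ▷ B) = Δ ≫ (B ◁ Δ) ≫ (α_ B B B).inv)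
    (hmΔ : m ≫ Δ = (Δ ⊗ₘ Δ) ≫ tensorμ B B B B ≫ (m ⊗ₘ m)) :
    (B ◁ Δ) ≫ (α_ B B B).inv ≫ (distribLaw m Δ ▷ B) ≫ (α_ B B B).hom ≫
        (B ◁ distribLaw m Δ) =
      distribLaw m Δ ≫ (Δ ▷ B) ≫ (α_ B B B).hom := by
  rw [whiskerLeft_comul_comp_distribLaw_twice]
  symm
  calc
    _ = 𝟙 _ ⊗≫ (Δ ▷ B) ⊗≫ (B ◁ (β_ B B).hom) ⊗≫
          ((Δ ⊗ₘ Δ) ≫ tensorμ B B B B ≫ (m ⊗ₘ m)) ▷ B ⊗≫ 𝟙 _ := by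
      rw [← hmΔ, distribLaw]; monoidal
    _ = 𝟙 _ ⊗≫ (Δ ▷ B) ⊗≫ (B ◁ (β_ B B).hom ≫ Δ ▷ (B ⊗ B)) ⊗≫ (B ◁ B ◁ (Δ ▷ B)) ⊗≫
          (B ◁ ((β_ B B).hom ▷ (B ⊗ B))) ⊗≫ (B ◁ B ◁ (m ▷ B)) ⊗≫ (m ▷ (B ⊗ B)) ⊗≫
          𝟙 _ := by
      rw [tensorHom_def Δ Δ, tensorHom_def' m m, tensorμ]; monoidal
    _ = 𝟙 _ ⊗≫ ((Δ ≫ Δ ▷ B) ▷ B) ⊗≫ (B ◁ B ◁ ((β_ B B).hom ≫ Δ ▷ B)) ⊗≫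
          (B ◁ ((β_ B B).hom ▷ (B ⊗ B))) ⊗≫ (B ◁ B ◁ (m ▷ B)) ⊗≫ (m ▷ (B ⊗ B)) ⊗≫
          𝟙 _ := by
      rw [whisker_exchange]; monoidal
    _ = 𝟙 _ ⊗≫ (((Δ ≫ B ◁ Δ ≫ (α_ B B B).inv) ▷ B) ≫ (((B ⊗ B) ⊗ B) ◁ Δ)) ⊗≫
          (B ◁ B ◁ (β_ B (B ⊗ B)).hom) ⊗≫ (B ◁ ((β_ B B).hom ▷ (B ⊗ B))) ⊗≫
          (B ◁ B ◁ (m ▷ B)) ⊗≫ (m ▷ (B ⊗ B)) ⊗≫ 𝟙 _ := by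
      rw [hcoassoc, ← braiding_naturality_right]; monoidal
    _ = 𝟙 _ ⊗≫ (B ◁ Δ) ⊗≫ ((Δ ≫ B ◁ Δ ≫ (α_ B B B).inv) ▷ (B ⊗ B)) ⊗≫
          (B ◁ B ◁ ((β_ B B).hom ▷ B)) ⊗≫
          (B ◁ ((B ⊗ B) ◁ (β_ B B).hom ≫ (β_ B B).hom ▷ (B ⊗ B))) ⊗≫
          (B ◁ B ◁ (m ▷ B)) ⊗≫ (m ▷ (B ⊗ B)) ⊗≫ 𝟙 _ := by
      rw [← whisker_exchange, braiding_tensor_right_hom]; monoidal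
    _ = 𝟙 _ ⊗≫ (B ◁ Δ) ⊗≫ ((Δ ≫ B ◁ Δ ≫ (α_ B B B).inv) ▷ (B ⊗ B)) ⊗≫
          (B ◁ B ◁ ((β_ B B).hom ▷ B)) ⊗≫ (B ◁ ((β_ B B).hom ▷ (B ⊗ B))) ⊗≫
          ((B ⊗ B) ◁ (B ◁ (β_ B B).hom)) ⊗≫ ((B ⊗ B) ◁ (m ▷ B) ≫ m ▷ (B ⊗ B)) ⊗≫
          𝟙 _ := by
      rw [whisker_exchange]; monoidal
    _ = _ := by rw [whisker_exchange]; monoidal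

theorem distribLaw_comp_counit_whiskerRight {m : B ⊗ B ⟶ B} {Δ : B ⟶ B ⊗ B} {ε : B ⟶ 𝟙_ C}
    (hε : Δ ≫ (ε ▷ B) ≫ (λ_ B).hom = 𝟙 B) (hmε : m ≫ ε = (ε ⊗ₘ ε) ≫ (λ_ (𝟙_ C)).hom) :
    distribLaw m Δ ≫ (ε ▷ B) ≫ (λ_ B).hom = (B ◁ ε) ≫ (ρ_ B).hom := by
  calc distribLaw m Δ ≫ (ε ▷ B) ≫ (λ_ B).hom
      = 𝟙 _ ⊗≫ (Δ ▷ B) ⊗≫ (B ◁ (β_ B B).hom) ⊗≫ ((m ≫ ε) ▷ B) ⊗≫ 𝟙 _ := by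
        unfold distribLaw; monoidal
    _ = 𝟙 _ ⊗≫ (Δ ▷ B) ⊗≫ (B ◁ ((β_ B B).hom ≫ ε ▷ B)) ⊗≫ (ε ▷ B) ⊗≫ 𝟙 _ := by
        rw [hmε, tensorHom_def']; monoidal
    _ = 𝟙 _ ⊗≫ (Δ ▷ B ≫ (B ⊗ B) ◁ ε) ⊗≫ (ε ▷ B) ⊗≫ 𝟙 _ := by
        rw [← braiding_naturality_right, braiding_tensorUnit_right]; monoidal
    _ = 𝟙 _ ⊗≫ (B ◁ ε) ⊗≫ ((Δ ≫ ε ▷ B ≫ (λ_ B).hom) ▷ 𝟙_ C) ⊗≫ 𝟙 _ := by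
        rw [← whisker_exchange]; monoidal
    _ = (B ◁ ε) ≫ (ρ_ B).hom := by rw [hε]; monoidal

end DistribLaw

/-- For a bialgebra `B` in a braided monoidal category, the morphism
`λ_B := (m ⊗ id) ∘ (id ⊗ c_{B,B}) ∘ (Δ ⊗ id)` satisfies the four distributive-law
identities and the bimonad compatibility `Δ ∘ m = (id ⊗ m) ∘ (λ_B ⊗ id) ∘ (id ⊗ Δ)`;
hence every bialgebra in `C`, equipped with `λ_B`, is a bimonad in the one-object
2-category determined by `C`. -/
theorem statement3 {C : Type*} [Category C] [MonoidalCategory C] [BraidedCategory C]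
    (B : C) (m : B ⊗ B ⟶ B) (η : 𝟙_ C ⟶ B) (Δ : B ⟶ B ⊗ B) (ε : B ⟶ 𝟙_ C)
    (hB : IsBialgebraIn B m η Δ ε) :
    ∀ lB : B ⊗ B ⟶ B ⊗ B,
      lB = (Δ ▷ B) ≫ (α_ B B B).hom ≫ (B ◁ (β_ B B).hom) ≫ (α_ B B B).inv ≫ (m ▷ B) →
      ((m ▷ B) ≫ lB =
          (α_ B B B).hom ≫ (B ◁ lB) ≫ (α_ B B B).inv ≫ (lB ▷ B) ≫
            (α_ B B B).hom ≫ (B ◁ m) ∧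
       (λ_ B).inv ≫ (η ▷ B) ≫ lB = (ρ_ B).inv ≫ (B ◁ η) ∧
       (B ◁ Δ) ≫ (α_ B B B).inv ≫ (lB ▷ B) ≫ (α_ B B B).hom ≫ (B ◁ lB) =
          lB ≫ (Δ ▷ B) ≫ (α_ B B B).hom ∧
       lB ≫ (ε ▷ B) ≫ (λ_ B).hom = (B ◁ ε) ≫ (ρ_ B).hom ∧
       m ≫ Δ = (B ◁ Δ) ≫ (α_ B B B).inv ≫ (lB ▷ B) ≫ (α_ B B B).hom ≫ (B ◁ m)) := by
  obtain ⟨hassoc, hηl, -, hcoassoc, hεl, -, hmΔ, hmε, hηΔ, -⟩ := hB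
  rw [exch_eq_tensorμ] at hmΔ
  rintro lB rfl
  exact ⟨mul_whiskerRight_comp_distribLaw hassoc hmΔ,
    unit_whiskerRight_comp_distribLaw hηl hηΔ,
    distribLaw_comp_comul_whiskerRight hcoassoc hmΔ,
    distribLaw_comp_counit_whiskerRight hεl hmε,
    hmΔ.trans (comul_tensorμ_mul_eq_distribLaw m Δ)⟩
end

section
/- Let C be a monoidal category, B an object with a bimonad datum (monoid (m,η), comonoid (Δ,ε), ε∘m = ε⊗ε, Δ∘η = η⊗η, ε∘η = id_𝟙), F an object, and ψ : B⊗F → F⊗B a morphism with ψ∘(η⊗id_F) = id_F⊗η. (1) Suppose η_M : 𝟙 → F⊗B satisfies the 2-cell condition (id_F⊗m)∘(η_M⊗id_B) = (id_F⊗m)∘(ψ⊗id_B)∘(id_B⊗η_M) and is canonical, η_M = η̃⊗η for some η̃ : 𝟙 → F. Then ψ∘(id_B⊗η̃) = η̃⊗id_B (the induced left F-coaction on B is trivial); if moreover Δ_M : F → F⊗F⊗B satisfies (id_F⊗id_F⊗m)∘(Δ_M⊗id_B)∘η_M = (id_F⊗id_F⊗m)∘(id_F⊗ψ⊗id_B)∘(η_M⊗η_M),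 then Φ_λ := Δ_M∘η̃ = η̃⊗η̃⊗η (the 3-cocycle Φ_λ is trivial). (2) Suppose ε_M : F → B satisfies the 2-cell condition m∘(ε_M⊗id_B)∘ψ = m∘(id_B⊗ε_M) and is canonical, ε_M = η∘ε̃ for some ε̃ : F → 𝟙. Then (ε̃⊗id_B)∘ψ = id_B⊗ε̃ (the induced right F-action on B is trivial); if moreover μ_M : F⊗F → F⊗B satisfies m∘(ε_M⊗ε_M) = m∘(ε_M⊗id_B)∘μ_M, then σ := (ε̃⊗id_B)∘μ_M = η∘(ε̃⊗ε̃) (the 2-cocycle σ is trivial). -/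
/-!
Canonical cells are built from the unit `η` of `B`, and the unit laws of `B` let the
multiplication swallow every `η` that the 2-cell conditions produce. Substituting
`η_M = η̃ ⊗ η` (resp. `ε_M = η ∘ ε̃`) therefore collapses one side of each condition to the
induced coaction, action or cocycle and the other side to its trivial value. For
`Φ_λ` the inner unit first has to be moved across `ψ`, which is what
`ψ ∘ (η ⊗ id_F) = id_F ⊗ η` allows.
-/

open CategoryTheory MonoidalCategory

theorem BimonadDatum.unit_whiskerRight_comp_mul {C : Type*} [Category C] [MonoidalCategory C]
    {B : C} {m : B ⊗ B ⟶ B} {η : 𝟙_ C ⟶ B} {Δ : B ⟶ B ⊗ B} {ε : B ⟶ 𝟙_ C}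
    (hB : BimonadDatum B m η Δ ε) : (η ▷ B) ≫ m = (λ_ B).hom := by
  rw [← cancel_epi (λ_ B).inv, Iso.inv_hom_id]
  exact hB.2.1

theorem BimonadDatum.whiskerLeft_unit_comp_mul {C : Type*} [Category C] [MonoidalCategory C]
    {B : C} {m : B ⊗ B ⟶ B} {η : 𝟙_ C ⟶ B} {Δ : B ⟶ B ⊗ B} {ε : B ⟶ 𝟙_ C}
    (hB : BimonadDatum B m η Δ ε) : (B ◁ η) ≫ m = (ρ_ B).hom := by
  rw [← cancel_epi (ρ_ B).inv, Iso.inv_hom_id]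
  exact hB.2.2.1

section UnitLaws

variable {C : Type*} [Category C] [MonoidalCategory C] {B : C} {m : B ⊗ B ⟶ B} {η : 𝟙_ C ⟶ B}

theorem rightUnitor_inv_whiskerLeft_unit_whiskerRight_comp_mul (hl : (η ▷ B) ≫ m = (λ_ B).hom)
    (Y : C) : (((ρ_ Y).inv ≫ (Y ◁ η)) ▷ B) ≫ (α_ Y B B).hom ≫ (Y ◁ m) = 𝟙 (Y ⊗ B) := by
  rw [comp_whiskerRight, Category.assoc, associator_naturality_middle_assoc,
    ← whiskerLeft_comp, hl]
  monoidal

theorem rightUnitor_inv_whiskerLeft_unit_comp_whiskerRight_comp_mul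
    (hr : (B ◁ η) ≫ m = (ρ_ B).hom) {X Y : C} (g : X ⟶ Y ⊗ B) :
    (ρ_ X).inv ≫ (X ◁ η) ≫ (g ▷ B) ≫ (α_ Y B B).hom ≫ (Y ◁ m) = g := by
  rw [whisker_exchange_assoc, associator_naturality_right_assoc, ← whiskerLeft_comp, hr,
    ← rightUnitor_inv_naturality_assoc]
  monoidal

theorem unit_tensorHom_unit_comp_mul (hl : (η ▷ B) ≫ m = (λ_ B).hom) :
    (η ⊗ₘ η) ≫ m = (λ_ (𝟙_ C)).hom ≫ η := by
  rw [tensorHom_def', Category.assoc, hl, leftUnitor_naturality, unitors_equal]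

theorem unit_whiskerRight_comp_whiskerRight_comp_mul {F : C} {ψ : B ⊗ F ⟶ F ⊗ B}
    (hψη : (η ▷ F) ≫ ψ = (λ_ F).hom ≫ (ρ_ F).inv ≫ (F ◁ η)) (hl : (η ▷ B) ≫ m = (λ_ B).hom) :
    (η ▷ (F ⊗ B)) ≫ (α_ B F B).inv ≫ (ψ ▷ B) ≫ (α_ F B B).hom ≫ (F ◁ m) = (λ_ (F ⊗ B)).hom := by
  rw [associator_inv_naturality_left_assoc, ← comp_whiskerRight_assoc, hψη,
    comp_whiskerRight_assoc, rightUnitor_inv_whiskerLeft_unit_whiskerRight_comp_mul hl]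
  monoidal

end UnitLaws

section CanonicalCells

variable {C : Type*} [Category C] [MonoidalCategory C] {B F : C} {m : B ⊗ B ⟶ B}
  {η : 𝟙_ C ⟶ B} {ψ : B ⊗ F ⟶ F ⊗ B}

theorem leftCoaction_trivial_of_canonical_unit (hl : (η ▷ B) ≫ m = (λ_ B).hom)
    (hr : (B ◁ η) ≫ m = (ρ_ B).hom) {ηM : 𝟙_ C ⟶ F ⊗ B} {ηt : 𝟙_ C ⟶ F}
    (hcell : (λ_ B).inv ≫ (ηM ▷ B) ≫ (α_ F B B).hom ≫ (F ◁ m) =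
        (ρ_ B).inv ≫ (B ◁ ηM) ≫ (α_ B F B).inv ≫ (ψ ▷ B) ≫ (α_ F B B).hom ≫ (F ◁ m))
    (hc : ηM = ηt ≫ (ρ_ F).inv ≫ (F ◁ η)) :
    (ρ_ B).inv ≫ (B ◁ ηt) ≫ ψ = (λ_ B).inv ≫ (ηt ▷ B) := by
  subst hc
  have hexpand : (B ◁ (ηt ≫ (ρ_ F).inv ≫ (F ◁ η))) ≫ (α_ B F B).inv =
      (B ◁ ηt) ≫ (ρ_ (B ⊗ F)).inv ≫ ((B ⊗ F) ◁ η) := by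
    monoidal
  rw [comp_whiskerRight_assoc, rightUnitor_inv_whiskerLeft_unit_whiskerRight_comp_mul hl,
    Category.comp_id, reassoc_of% hexpand,
    rightUnitor_inv_whiskerLeft_unit_comp_whiskerRight_comp_mul hr] at hcell
  exact hcell.symm

theorem phiLambda_trivial_of_canonical_unit
    (hψη : (η ▷ F) ≫ ψ = (λ_ F).hom ≫ (ρ_ F).inv ≫ (F ◁ η))
    (hl : (η ▷ B) ≫ m = (λ_ B).hom) (hr : (B ◁ η) ≫ m = (ρ_ B).hom)
    {ηM : 𝟙_ C ⟶ F ⊗ B} {ηt : 𝟙_ C ⟶ F} (hc : ηM = ηt ≫ (ρ_ F).inv ≫ (F ◁ η))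
    {ΔM : F ⟶ (F ⊗ F) ⊗ B}
    (hΔ : ηM ≫ (ΔM ▷ B) ≫ (α_ (F ⊗ F) B B).hom ≫ ((F ⊗ F) ◁ m) =
      (λ_ (𝟙_ C)).inv ≫ (ηM ⊗ₘ ηM) ≫ (α_ F B (F ⊗ B)).hom ≫
        (F ◁ (α_ B F B).inv) ≫ (F ◁ (ψ ▷ B)) ≫ (F ◁ (α_ F B B).hom) ≫
        (F ◁ (F ◁ m)) ≫ (α_ F F B).inv) :
    ηt ≫ ΔM = ((λ_ (𝟙_ C)).inv ≫ (ηt ⊗ₘ ηt)) ≫ (ρ_ (F ⊗ F)).inv ≫ ((F ⊗ F) ◁ η) := by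
  have hsplit : ηM ⊗ₘ ηM = (ηt ⊗ₘ ηM) ≫ (((ρ_ F).inv ≫ (F ◁ η)) ▷ (F ⊗ B)) := by
    rw [hc, ← tensorHom_id, tensorHom_comp_tensorHom, Category.comp_id]
  have hcollapse : (((ρ_ F).inv ≫ (F ◁ η)) ▷ (F ⊗ B)) ≫ (α_ F B (F ⊗ B)).hom ≫
      (F ◁ (α_ B F B).inv) ≫ (F ◁ (ψ ▷ B)) ≫ (F ◁ (α_ F B B).hom) ≫ (F ◁ (F ◁ m)) =
      ((ρ_ F).inv ▷ (F ⊗ B)) ≫ (α_ F (𝟙_ C) (F ⊗ B)).hom ≫ (F ◁ (λ_ (F ⊗ B)).hom) := by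
    simp only [comp_whiskerRight_assoc, associator_naturality_middle_assoc,
      ← whiskerLeft_comp, unit_whiskerRight_comp_whiskerRight_comp_mul hψη hl]
  rw [hsplit, Category.assoc, reassoc_of% hcollapse, hc] at hΔ
  simp only [Category.assoc, rightUnitor_inv_whiskerLeft_unit_comp_whiskerRight_comp_mul hr] at hΔ
  rw [hΔ]
  monoidal

theorem rightAction_trivial_of_canonical_counit (hl : (η ▷ B) ≫ m = (λ_ B).hom)
    (hr : (B ◁ η) ≫ m = (ρ_ B).hom) {εM : F ⟶ B} {εt : F ⟶ 𝟙_ C}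
    (hcell : ψ ≫ (εM ▷ B) ≫ m = (B ◁ εM) ≫ m) (hc : εM = εt ≫ η) :
    ψ ≫ (εt ▷ B) ≫ (λ_ B).hom = (B ◁ εt) ≫ (ρ_ B).hom := by
  subst hc
  simpa only [comp_whiskerRight, whiskerLeft_comp, Category.assoc, hl, hr] using hcell

theorem sigma_trivial_of_canonical_counit (hl : (η ▷ B) ≫ m = (λ_ B).hom)
    {εM : F ⟶ B} {εt : F ⟶ 𝟙_ C} (hc : εM = εt ≫ η) {μM : F ⊗ F ⟶ F ⊗ B}
    (hμ : (εM ⊗ₘ εM) ≫ m = μM ≫ (εM ▷ B) ≫ m) :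
    μM ≫ (εt ▷ B) ≫ (λ_ B).hom = (εt ⊗ₘ εt) ≫ (λ_ (𝟙_ C)).hom ≫ η := by
  subst hc
  rw [comp_whiskerRight_assoc, hl, ← tensorHom_comp_tensorHom_assoc,
    unit_tensorHom_unit_comp_mul hl] at hμ
  exact hμ.symm

end CanonicalCells

/-- Triviality of the structures induced by canonical 2-cells:
(1) if `η_M` is a canonical 2-cell then the induced left `F`-coaction on `B` is trivial
and, in presence of the `Δ_M`–`η_M` compatibility, the 3-cocycle `Φ_λ` is trivial;
(2) if `ε_M` is canonical then the induced right `F`-action on `B` is trivial and, in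
presence of the `ε_M`–`μ_M` compatibility, the 2-cocycle `σ` is trivial. -/
theorem statement4 {C : Type*} [Category C] [MonoidalCategory C]
    (B F : C) (m : B ⊗ B ⟶ B) (η : 𝟙_ C ⟶ B) (Δ : B ⟶ B ⊗ B) (ε : B ⟶ 𝟙_ C)
    (hB : BimonadDatum B m η Δ ε)
    (ψ : B ⊗ F ⟶ F ⊗ B)
    (hψη : (η ▷ F) ≫ ψ = (λ_ F).hom ≫ (ρ_ F).inv ≫ (F ◁ η)) :
    (∀ ηM : 𝟙_ C ⟶ F ⊗ B, ∀ ηt : 𝟙_ C ⟶ F,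
      ((λ_ B).inv ≫ (ηM ▷ B) ≫ (α_ F B B).hom ≫ (F ◁ m) =
        (ρ_ B).inv ≫ (B ◁ ηM) ≫ (α_ B F B).inv ≫ (ψ ▷ B) ≫
          (α_ F B B).hom ≫ (F ◁ m)) →
      ηM = ηt ≫ (ρ_ F).inv ≫ (F ◁ η) →
      (((ρ_ B).inv ≫ (B ◁ ηt) ≫ ψ = (λ_ B).inv ≫ (ηt ▷ B)) ∧
       (∀ ΔM : F ⟶ (F ⊗ F) ⊗ B,
          (ηM ≫ (ΔM ▷ B) ≫ (α_ (F ⊗ F) B B).hom ≫ ((F ⊗ F) ◁ m) =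
            (λ_ (𝟙_ C)).inv ≫ (ηM ⊗ₘ ηM) ≫ (α_ F B (F ⊗ B)).hom ≫
              (F ◁ (α_ B F B).inv) ≫ (F ◁ (ψ ▷ B)) ≫ (F ◁ (α_ F B B).hom) ≫
              (F ◁ (F ◁ m)) ≫ (α_ F F B).inv) →
          ηt ≫ ΔM =
            ((λ_ (𝟙_ C)).inv ≫ (ηt ⊗ₘ ηt)) ≫ (ρ_ (F ⊗ F)).inv ≫ ((F ⊗ F) ◁ η)))) ∧
    (∀ εM : F ⟶ B, ∀ εt : F ⟶ 𝟙_ C,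
      (ψ ≫ (εM ▷ B) ≫ m = (B ◁ εM) ≫ m) →
      εM = εt ≫ η →
      ((ψ ≫ (εt ▷ B) ≫ (λ_ B).hom = (B ◁ εt) ≫ (ρ_ B).hom) ∧
       (∀ μM : F ⊗ F ⟶ F ⊗ B,
          ((εM ⊗ₘ εM) ≫ m = μM ≫ (εM ▷ B) ≫ m) →
          μM ≫ (εt ▷ B) ≫ (λ_ B).hom = (εt ⊗ₘ εt) ≫ (λ_ (𝟙_ C)).hom ≫ η))) := by
  have hl := hB.unit_whiskerRight_comp_mul
  have hr := hB.whiskerLeft_unit_comp_mul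
  exact ⟨fun _ _ hcell hc =>
      ⟨leftCoaction_trivial_of_canonical_unit hl hr hcell hc,
        fun _ hΔ => phiLambda_trivial_of_canonical_unit hψη hl hr hc hΔ⟩,
    fun _ _ hcell hc =>
      ⟨rightAction_trivial_of_canonical_counit hl hr hcell hc,
        fun _ hμ => sigma_trivial_of_canonical_counit hl hc hμ⟩⟩
end

section
/- Let C be a monoidal category, B an object with a bimonad datum (monoid (m,η), comonoid (Δ,ε), ε∘m = ε⊗ε, Δ∘η = η⊗η, ε∘η = id_𝟙), F an object, ψ : B⊗F → F⊗B a morphism, and ε̃ : F → 𝟙, η̃ : 𝟙 → F morphisms with ε̃∘η̃ = id_𝟙. (1) Suppose μ_M : F⊗F → F⊗B and η_M : 𝟙 → F⊗B satisfy the 2-cell conditions (id_F⊗m)∘(μ_M⊗id_B)∘(id_F⊗ψ)∘(ψ⊗id_F) = (id_F⊗m)∘(ψ⊗id_B)∘(id_B⊗μ_M) and (id_F⊗m)∘(η_M⊗id_B) = (id_F⊗m)∘(ψ⊗id_B)∘(id_B⊗η_M), that μ_M = μ̃⊗η and η_M = η̃⊗η are canonical, and that the 2-cocycle σ := (ε̃⊗id_B)∘μ_M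 is trivial, σ = η∘(ε̃⊗ε̃). Then ◁ := (ε̃⊗id_B)∘ψ : B⊗F → B is a right F-action: ◁∘(◁⊗id_F) = ◁∘(id_B⊗μ̃) and ◁∘(id_B⊗η̃) = id_B. (2) Suppose Δ_M : F → F⊗F⊗B and ε_M : F → B satisfy the 2-cell conditions (id_{F⊗F}⊗m)∘(Δ_M⊗id_B)∘ψ = (id_{F⊗F}⊗m)∘(id_F⊗ψ⊗id_B)∘(ψ⊗id_F⊗id_B)∘(id_B⊗Δ_M) and m∘(ε_M⊗id_B)∘ψ = m∘(id_B⊗ε_M), that Δ_M = Δ̃⊗η and ε_M = η∘ε̃ are canonical, and that the 3-cocycle Φ_λ := Δ_M∘η̃ is trivial, Φ_λ = η̃⊗η̃⊗η. Then ϱ := ψ∘(id_B⊗η̃) : B → F⊗B is a left F-coaction: (Δ̃⊗id_B)∘ϱ = (id_F⊗ϱ)∘ϱ and (ε̃⊗id_B)∘ϱ = id_B. -/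
open CategoryTheory MonoidalCategory

/-!
For canonical data the unit laws of `B` strip the factor `η` from the 2-cell conditions,
which then say that `ψ` commutes with `μ̃`, `η̃` (resp. `Δ̃`, `ε̃`). Since `η` is split by `ε`,
the trivial cocycles say that `ε̃` is multiplicative (resp. `η̃` comultiplicative), and the
(co)action axioms follow by sliding `ε̃` (resp. `η̃`) through `ψ`.
-/

section UnitCancellation

variable {C : Type*} [Category C] [MonoidalCategory C] {B : C} {m : B ⊗ B ⟶ B}
  {η : 𝟙_ C ⟶ B}

theorem unit_whiskerRight_mul (hl : (λ_ B).inv ≫ η ▷ B ≫ m = 𝟙 B) :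
    η ▷ B ≫ m = (λ_ B).hom := by
  simpa using (λ_ B).hom ≫= hl

theorem whiskerLeft_unit_mul (hr : (ρ_ B).inv ≫ B ◁ η ≫ m = 𝟙 B) :
    B ◁ η ≫ m = (ρ_ B).hom := by
  simpa using (ρ_ B).hom ≫= hr

theorem tensorUnit_whiskerRight_mul (hl : (λ_ B).inv ≫ η ▷ B ≫ m = 𝟙 B)
    {X Y : C} (f : X ⟶ Y) :
    (f ≫ (ρ_ Y).inv ≫ Y ◁ η) ▷ B ≫ (α_ Y B B).hom ≫ Y ◁ m = f ▷ B := by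
  simp only [comp_whiskerRight, Category.assoc, associator_naturality_middle_assoc,
    ← whiskerLeft_comp, unit_whiskerRight_mul hl]
  simp

theorem whiskerLeft_tensorUnit_mul (hr : (ρ_ B).inv ≫ B ◁ η ≫ m = 𝟙 B)
    {X Y Z : C} (f : X ⟶ Y) (g : B ⊗ Y ⟶ Z ⊗ B) :
    B ◁ (f ≫ (ρ_ Y).inv ≫ Y ◁ η) ≫ (α_ B Y B).inv ≫ g ▷ B ≫ (α_ Z B B).hom ≫ Z ◁ m =
      B ◁ f ≫ g := by
  simp only [whiskerLeft_comp, Category.assoc]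
  rw [associator_inv_naturality_right_assoc, whisker_exchange_assoc,
    associator_naturality_right_assoc, ← whiskerLeft_comp, whiskerLeft_unit_mul hr]
  simp

variable {ε : B ⟶ 𝟙_ C}

theorem eq_of_comp_tensorUnit_eq (hηε : η ≫ ε = 𝟙 (𝟙_ C)) {X Y : C} {f g : X ⟶ Y}
    (h : f ≫ (ρ_ Y).inv ≫ Y ◁ η = g ≫ (ρ_ Y).inv ≫ Y ◁ η) : f = g := by
  simpa [← whiskerLeft_comp_assoc, hηε] using h =≫ (Y ◁ ε ≫ (ρ_ Y).hom)

theorem comp_eq_of_tensorUnit_whiskerRight_eq (hηε : η ≫ ε = 𝟙 (𝟙_ C)) {X F : C}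
    {f : X ⟶ F} {εt : F ⟶ 𝟙_ C} {g : X ⟶ 𝟙_ C}
    (h : (f ≫ (ρ_ F).inv ≫ F ◁ η) ≫ εt ▷ B ≫ (λ_ B).hom = g ≫ η) : f ≫ εt = g := by
  have hf : (f ≫ (ρ_ F).inv ≫ F ◁ η) ≫ εt ▷ B ≫ (λ_ B).hom = (f ≫ εt) ≫ η := by
    simp only [Category.assoc, whisker_exchange_assoc, id_whiskerLeft, unitors_equal]
    simp
  simpa [hηε] using (hf.symm.trans h) =≫ ε

end UnitCancellation

section DistributiveLaw

variable {C : Type*} [Category C] [MonoidalCategory C] {B F : C} (ψ : B ⊗ F ⟶ F ⊗ B)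
  {εt : F ⟶ 𝟙_ C} {ηt : 𝟙_ C ⟶ F}

theorem rightAction_assoc {μt : F ⊗ F ⟶ F}
    (hψμ : (α_ B F F).inv ≫ ψ ▷ F ≫ (α_ F B F).hom ≫ F ◁ ψ ≫ (α_ F F B).inv ≫ μt ▷ B =
      B ◁ μt ≫ ψ)
    (hμε : μt ≫ εt = (εt ⊗ₘ εt) ≫ (λ_ (𝟙_ C)).hom) :
    ((ψ ≫ εt ▷ B ≫ (λ_ B).hom) ▷ F) ≫ ψ ≫ εt ▷ B ≫ (λ_ B).hom =
      (α_ B F F).hom ≫ B ◁ μt ≫ ψ ≫ εt ▷ B ≫ (λ_ B).hom := by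
  have hslide : εt ▷ B ▷ F ≫ (λ_ B).hom ▷ F ≫ ψ =
      (α_ F B F).hom ≫ F ◁ ψ ≫ εt ▷ (F ⊗ B) ≫ (λ_ (F ⊗ B)).hom := by
    rw [whisker_exchange_assoc, leftUnitor_naturality]
    monoidal
  rw [← reassoc_of% hψμ, ← comp_whiskerRight_assoc, hμε]
  simp only [comp_whiskerRight, Category.assoc, reassoc_of% hslide,
    MonoidalCategory.tensorHom_def]
  monoidal

theorem rightAction_unit (hψη : (λ_ B).inv ≫ ηt ▷ B = (ρ_ B).inv ≫ B ◁ ηt ≫ ψ)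
    (hεη : ηt ≫ εt = 𝟙 (𝟙_ C)) :
    (ρ_ B).inv ≫ B ◁ ηt ≫ ψ ≫ εt ▷ B ≫ (λ_ B).hom = 𝟙 B := by
  rw [reassoc_of% hψη.symm, ← comp_whiskerRight_assoc, hεη]
  simp

theorem leftCoaction_coassoc {Δt : F ⟶ F ⊗ F}
    (hψΔ : ψ ≫ Δt ▷ B =
      B ◁ Δt ≫ (α_ B F F).inv ≫ ψ ▷ F ≫ (α_ F B F).hom ≫ F ◁ ψ ≫ (α_ F F B).inv)
    (hηΔ : ηt ≫ Δt = (λ_ (𝟙_ C)).inv ≫ (ηt ⊗ₘ ηt)) :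
    ((ρ_ B).inv ≫ B ◁ ηt ≫ ψ) ≫ Δt ▷ B =
      ((ρ_ B).inv ≫ B ◁ ηt ≫ ψ) ≫ F ◁ ((ρ_ B).inv ≫ B ◁ ηt ≫ ψ) ≫ (α_ F F B).inv := by
  rw [Category.assoc, Category.assoc, hψΔ, ← whiskerLeft_comp_assoc, hηΔ]
  have hslide : ψ ≫ F ◁ (ρ_ B).inv ≫ F ◁ B ◁ ηt =
      (ρ_ (B ⊗ F)).inv ≫ (B ⊗ F) ◁ ηt ≫ ψ ▷ F ≫ (α_ F B F).hom := by
    rw [whisker_exchange_assoc, ← rightUnitor_inv_naturality_assoc]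
    monoidal
  simp only [whiskerLeft_comp, Category.assoc, reassoc_of% hslide,
    MonoidalCategory.tensorHom_def]
  monoidal

theorem leftCoaction_counit (hψε : ψ ≫ εt ▷ B ≫ (λ_ B).hom = B ◁ εt ≫ (ρ_ B).hom)
    (hεη : ηt ≫ εt = 𝟙 (𝟙_ C)) :
    ((ρ_ B).inv ≫ B ◁ ηt ≫ ψ) ≫ εt ▷ B ≫ (λ_ B).hom = 𝟙 B := by
  rw [Category.assoc, Category.assoc, hψε, ← whiskerLeft_comp_assoc, hεη]
  simp

end DistributiveLaw

/-- (1) If `μ_M`, `η_M` satisfy the 2-cell conditions, are canonical,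
and the 2-cocycle `σ` is trivial, then `◁ := (ε̃ ⊗ id_B) ∘ ψ` is a right `F`-action on
`B`.  (2) If `Δ_M`, `ε_M` satisfy the 2-cell conditions, are canonical, and the
3-cocycle `Φ_λ` is trivial, then `ϱ := ψ ∘ (id_B ⊗ η̃)` is a left `F`-coaction on `B`. -/
theorem statement7 {C : Type*} [Category C] [MonoidalCategory C]
    (B F : C) (m : B ⊗ B ⟶ B) (η : 𝟙_ C ⟶ B) (Δ : B ⟶ B ⊗ B) (ε : B ⟶ 𝟙_ C)
    (hB : BimonadDatum B m η Δ ε)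
    (ψ : B ⊗ F ⟶ F ⊗ B)
    (εt : F ⟶ 𝟙_ C) (ηt : 𝟙_ C ⟶ F)
    (hεη : ηt ≫ εt = 𝟙 (𝟙_ C)) :
    (∀ (μM : F ⊗ F ⟶ F ⊗ B) (ηM : 𝟙_ C ⟶ F ⊗ B) (μt : F ⊗ F ⟶ F),
      -- 2-cell condition for μ_M
      ((α_ B F F).inv ≫ (ψ ▷ F) ≫ (α_ F B F).hom ≫ (F ◁ ψ) ≫ (α_ F F B).inv ≫
          (μM ▷ B) ≫ (α_ F B B).hom ≫ (F ◁ m) =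
        (B ◁ μM) ≫ (α_ B F B).inv ≫ (ψ ▷ B) ≫ (α_ F B B).hom ≫ (F ◁ m)) →
      -- 2-cell condition for η_M
      ((λ_ B).inv ≫ (ηM ▷ B) ≫ (α_ F B B).hom ≫ (F ◁ m) =
        (ρ_ B).inv ≫ (B ◁ ηM) ≫ (α_ B F B).inv ≫ (ψ ▷ B) ≫
          (α_ F B B).hom ≫ (F ◁ m)) →
      -- canonicity
      μM = μt ≫ (ρ_ F).inv ≫ (F ◁ η) →
      ηM = ηt ≫ (ρ_ F).inv ≫ (F ◁ η) →
      -- triviality of the 2-cocycle σ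
      (μM ≫ (εt ▷ B) ≫ (λ_ B).hom = (εt ⊗ₘ εt) ≫ (λ_ (𝟙_ C)).hom ≫ η) →
      -- conclusion: ◁ is a right F-action on B
      ∀ act : B ⊗ F ⟶ B, act = ψ ≫ (εt ▷ B) ≫ (λ_ B).hom →
        ((act ▷ F) ≫ act = (α_ B F F).hom ≫ (B ◁ μt) ≫ act ∧
         (ρ_ B).inv ≫ (B ◁ ηt) ≫ act = 𝟙 B)) ∧
    (∀ (ΔM : F ⟶ (F ⊗ F) ⊗ B) (εM : F ⟶ B) (Δt : F ⟶ F ⊗ F),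
      -- 2-cell condition for Δ_M
      (ψ ≫ (ΔM ▷ B) ≫ (α_ (F ⊗ F) B B).hom ≫ ((F ⊗ F) ◁ m) =
        (B ◁ ΔM) ≫ (α_ B (F ⊗ F) B).inv ≫ ((α_ B F F).inv ▷ B) ≫
          ((ψ ▷ F) ▷ B) ≫ ((α_ F B F).hom ▷ B) ≫ ((F ◁ ψ) ▷ B) ≫
          (α_ F (F ⊗ B) B).hom ≫ (F ◁ (α_ F B B).hom) ≫ (F ◁ (F ◁ m)) ≫
          (α_ F F B).inv) →
      -- 2-cell condition for ε_M
      (ψ ≫ (εM ▷ B) ≫ m = (B ◁ εM) ≫ m) →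
      -- canonicity
      ΔM = Δt ≫ (ρ_ (F ⊗ F)).inv ≫ ((F ⊗ F) ◁ η) →
      εM = εt ≫ η →
      -- triviality of the 3-cocycle Φ_λ
      (ηt ≫ ΔM = ((λ_ (𝟙_ C)).inv ≫ (ηt ⊗ₘ ηt)) ≫ (ρ_ (F ⊗ F)).inv ≫
        ((F ⊗ F) ◁ η)) →
      -- conclusion: ϱ is a left F-coaction on B
      ∀ ϱ : B ⟶ F ⊗ B, ϱ = (ρ_ B).inv ≫ (B ◁ ηt) ≫ ψ →
        (ϱ ≫ (Δt ▷ B) = ϱ ≫ (F ◁ ϱ) ≫ (α_ F F B).inv ∧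
         ϱ ≫ (εt ▷ B) ≫ (λ_ B).hom = 𝟙 B)) := by
  obtain ⟨-, hl, hr, -, -, -, -, -, hηε_B⟩ := hB
  refine ⟨?_, ?_⟩
  · rintro μM ηM μt hμM hηM rfl rfl hσ act rfl
    rw [tensorUnit_whiskerRight_mul hl, whiskerLeft_tensorUnit_mul hr] at hμM hηM
    have hμε : μt ≫ εt = (εt ⊗ₘ εt) ≫ (λ_ (𝟙_ C)).hom :=
      comp_eq_of_tensorUnit_whiskerRight_eq hηε_B (by simpa only [Category.assoc] using hσ)
    exact ⟨rightAction_assoc ψ hμM hμε, rightAction_unit ψ hηM hεη⟩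
  · rintro ΔM εM Δt hΔM hεM rfl rfl hΦ ϱ rfl
    have hψΔ : ψ ≫ Δt ▷ B =
        B ◁ Δt ≫ (α_ B F F).inv ≫ ψ ▷ F ≫ (α_ F B F).hom ≫ F ◁ ψ ≫ (α_ F F B).inv := by
      rw [tensorUnit_whiskerRight_mul hl] at hΔM
      rw [hΔM, ← whiskerLeft_tensorUnit_mul hr Δt]
      monoidal
    have hψε : ψ ≫ εt ▷ B ≫ (λ_ B).hom = B ◁ εt ≫ (ρ_ B).hom := by
      simpa only [comp_whiskerRight, whiskerLeft_comp, Category.assoc,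
        unit_whiskerRight_mul hl, whiskerLeft_unit_mul hr] using hεM
    have hηΔ : ηt ≫ Δt = (λ_ (𝟙_ C)).inv ≫ (ηt ⊗ₘ ηt) :=
      eq_of_comp_tensorUnit_eq hηε_B (by simpa only [Category.assoc] using hΦ)
    exact ⟨leftCoaction_coassoc ψ hψΔ hηΔ, leftCoaction_counit ψ hψε hεη⟩
end

section
/- Let F be a bialgebra in a braided monoidal category C with braiding c, and let ρ : 𝟙 → F⊗F be a morphism. Define the ρ-twisted comultiplication Δ_ρ := (m⊗m)∘(id_F⊗c_{F,F}⊗id_F)∘(Δ⊗ρ) : F → F⊗F (where F is identified with F⊗𝟙). If ρ is a normalized Drinfel'd twist, i.e. (Δ_ρ⊗id_F)∘ρ = (id_F⊗Δ_ρ)∘ρ : 𝟙 → F⊗F⊗F and (ε⊗id_F)∘ρ = η = (id_F⊗ε)∘ρ, then Δ_ρ is a coassociative comultiplication on F with counit ε: (Δ_ρ⊗id_F)∘Δ_ρ = (id_F⊗Δ_ρ)∘Δ_ρ and (ε⊗id_F)∘Δ_ρ = id_F = (id_F⊗ε)∘Δ_ρ. -/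
open CategoryTheory MonoidalCategory

/-! Because `Δ` is a monoid morphism `F ⟶ F ⊗ F`, the twisted comultiplication is `Δ` followed by
right multiplication by the point `ρ` of the monoid `F ⊗ F`. Right multiplications compose
(multiplying by `r`, then by `s`, is multiplying by `r · s`), slide past monoid morphisms, and
whiskering turns multiplication by `ρ` into multiplication by `ρ ⊗ 1` or `1 ⊗ ρ`. So the two sides
of coassociativity for `Δ_ρ` are the two sides of coassociativity for `Δ` followed by right
multiplication by `ρ ≫ (Δ_ρ ⊗ 1)` and by `ρ ≫ (1 ⊗ Δ_ρ)`, which agree because `ρ` is a twist.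
Counitality follows the same way, with the counit maps `F ⊗ F ⟶ F` as monoid morphisms. -/

namespace CategoryTheory

lemma whiskerLeft_leftUnitor_inv_comp_tensorμ {C : Type*} [Category C] [MonoidalCategory C]
    [BraidedCategory C] (X Y : C) :
    (X ⊗ Y) ◁ (λ_ (𝟙_ C)).inv ≫ tensorμ X Y (𝟙_ C) (𝟙_ C) =
      (ρ_ (X ⊗ Y)).hom ≫ ((ρ_ X).inv ⊗ₘ (ρ_ Y).inv) := by
  rw [tensor_right_unitality]
  simp [tensorHom_comp_tensorHom]

namespace MonObj

variable {C : Type*} [Category C] [MonoidalCategory C]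

def rightMul {M : C} [MonObj M] (r : 𝟙_ C ⟶ M) : M ⟶ M :=
  (ρ_ M).inv ≫ M ◁ r ≫ μ

variable {M N : C} [MonObj M] [MonObj N]

@[simp]
lemma rightMul_one : rightMul η[M] = 𝟙 M := by
  simp [rightMul]

lemma rightMul_comp_rightMul (r s : 𝟙_ C ⟶ M) :
    rightMul r ≫ rightMul s = rightMul (r ≫ rightMul s) := by
  simp only [rightMul, MonoidalCategory.whiskerLeft_comp, Category.assoc]
  slice_lhs 3 4 => rw [rightUnitor_inv_naturality]
  slice_lhs 4 5 => rw [← whisker_exchange]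
  slice_lhs 5 6 => rw [MonObj.mul_assoc]
  slice_lhs 4 5 => rw [associator_naturality_right]
  have unitors : (ρ_ (M ⊗ M)).inv ≫ (α_ M M (𝟙_ C)).hom = M ◁ (ρ_ M).inv := by
    monoidal
  slice_lhs 3 4 => rw [unitors]
  simp

lemma rightMul_comp (r : 𝟙_ C ⟶ M) (f : M ⟶ N) [IsMonHom f] :
    rightMul r ≫ f = f ≫ rightMul (r ≫ f) := by
  simp only [rightMul, Category.assoc, IsMonHom.mul_hom, MonoidalCategory.tensorHom_def]
  slice_lhs 2 3 => rw [whisker_exchange]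
  slice_rhs 1 2 => rw [rightUnitor_inv_naturality]
  simp [MonoidalCategory.whiskerLeft_comp]

lemma comp_rightMul_comp_eq_id {f : M ⟶ N} {g : N ⟶ M} [IsMonHom g] (r : 𝟙_ C ⟶ N)
    (hfg : f ≫ g = 𝟙 M) (hrg : r ≫ g = η) : (f ≫ rightMul r) ≫ g = 𝟙 M := by
  rw [Category.assoc, rightMul_comp, hrg, reassoc_of% hfg, rightMul_one]

lemma comp_rightMul_comp_comp_rightMul {X P : C} [MonObj P] (f : X ⟶ M) (r : 𝟙_ C ⟶ M)
    (g : M ⟶ P) [IsMonHom g] (s : 𝟙_ C ⟶ P) :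
    (f ≫ rightMul r) ≫ g ≫ rightMul s = (f ≫ g) ≫ rightMul (r ≫ g ≫ rightMul s) := by
  rw [Category.assoc, ← Category.assoc (rightMul r), rightMul_comp, Category.assoc,
    rightMul_comp_rightMul, Category.assoc, Category.assoc]

section Braided

variable [BraidedCategory C]

lemma rightMul_whiskerRight (r : 𝟙_ C ⟶ M) :
    rightMul r ▷ N = rightMul ((λ_ (𝟙_ C)).inv ≫ (r ⊗ₘ η[N])) := by
  simp only [rightMul, tensorObj.mul_def, MonoidalCategory.whiskerLeft_comp, Category.assoc]
  slice_rhs 3 4 => rw [tensorμ_natural_right]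
  slice_rhs 2 3 => rw [whiskerLeft_leftUnitor_inv_comp_tensorμ]
  simp only [Iso.inv_hom_id_assoc, tensorHom_comp_tensorHom, Category.assoc, MonObj.mul_one,
    Iso.inv_hom_id, tensorHom_id]

lemma whiskerLeft_rightMul (r : 𝟙_ C ⟶ M) :
    N ◁ rightMul r = rightMul ((λ_ (𝟙_ C)).inv ≫ (η[N] ⊗ₘ r)) := by
  simp only [rightMul, tensorObj.mul_def, MonoidalCategory.whiskerLeft_comp, Category.assoc]
  slice_rhs 3 4 => rw [tensorμ_natural_right]
  slice_rhs 2 3 => rw [whiskerLeft_leftUnitor_inv_comp_tensorμ]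
  simp [tensorHom_comp_tensorHom]

lemma rightUnitor_inv_comp_tensorHom_comp_exch {X : C} (f : X ⟶ M ⊗ N) (r : 𝟙_ C ⟶ M ⊗ N) :
    (ρ_ X).inv ≫ (f ⊗ₘ r) ≫ exch M N M N ≫ (μ ⊗ₘ μ) = f ≫ rightMul r := by
  rw [MonoidalCategory.tensorHom_def, Category.assoc, ← rightUnitor_inv_naturality_assoc]
  -- `exch M N M N` is `tensorμ M N M N`, and `μ[M ⊗ N]` is `tensorμ M N M N ≫ (μ ⊗ₘ μ)`.
  rfl

lemma comp_rightMul_coassoc (Δ : M ⟶ M ⊗ M) [IsMonHom Δ]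
    (hΔ : Δ ≫ Δ ▷ M = Δ ≫ M ◁ Δ ≫ (α_ M M M).inv) (ρ : 𝟙_ C ⟶ M ⊗ M)
    (hρ : ρ ≫ (Δ ≫ rightMul ρ) ▷ M = ρ ≫ M ◁ (Δ ≫ rightMul ρ) ≫ (α_ M M M).inv) :
    (Δ ≫ rightMul ρ) ≫ (Δ ≫ rightMul ρ) ▷ M =
      (Δ ≫ rightMul ρ) ≫ M ◁ (Δ ≫ rightMul ρ) ≫ (α_ M M M).inv := by
  have left : (Δ ≫ rightMul ρ) ≫ (Δ ≫ rightMul ρ) ▷ M =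
      (Δ ≫ Δ ▷ M) ≫ rightMul (ρ ≫ (Δ ≫ rightMul ρ) ▷ M) := by
    rw [comp_whiskerRight, rightMul_whiskerRight, comp_rightMul_comp_comp_rightMul]
  have right : (Δ ≫ rightMul ρ) ≫ M ◁ (Δ ≫ rightMul ρ) ≫ (α_ M M M).inv =
      (Δ ≫ M ◁ Δ ≫ (α_ M M M).inv) ≫ rightMul (ρ ≫ M ◁ (Δ ≫ rightMul ρ) ≫ (α_ M M M).inv) := by
    rw [MonoidalCategory.whiskerLeft_comp, whiskerLeft_rightMul, ← Category.assoc,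
      comp_rightMul_comp_comp_rightMul, Category.assoc, rightMul_comp]
    simp only [Category.assoc]
  rw [left, right, hΔ, hρ]

end Braided

end MonObj

end CategoryTheory

namespace IsBialgebraIn

variable {C : Type*} [Category C] [MonoidalCategory C] [BraidedCategory C] {F : C}
  {m : F ⊗ F ⟶ F} {η : 𝟙_ C ⟶ F} {Δ : F ⟶ F ⊗ F} {ε : F ⟶ 𝟙_ C}

abbrev monObj (hF : IsBialgebraIn F m η Δ ε) : MonObj F where
  one := η
  mul := m
  one_mul := by rw [← cancel_epi (λ_ F).inv, hF.2.1, Iso.inv_hom_id]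
  mul_one := by rw [← cancel_epi (ρ_ F).inv, hF.2.2.1, Iso.inv_hom_id]
  mul_assoc := hF.1

lemma isMonHom_comul (hF : IsBialgebraIn F m η Δ ε) :
    letI := hF.monObj
    IsMonHom Δ :=
  letI := hF.monObj
  ⟨hF.2.2.2.2.2.2.2.2.1, hF.2.2.2.2.2.2.1⟩

lemma isMonHom_counit (hF : IsBialgebraIn F m η Δ ε) :
    letI := hF.monObj
    IsMonHom ε :=
  letI := hF.monObj
  ⟨hF.2.2.2.2.2.2.2.2.2, hF.2.2.2.2.2.2.2.1⟩

end IsBialgebraIn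

/-- If `ρ : 𝟙 ⟶ F ⊗ F` is a normalized Drinfel'd twist on a bialgebra
`F` in a braided monoidal category, then the `ρ`-twisted comultiplication
`Δ_ρ := (m ⊗ m) ∘ (id ⊗ c ⊗ id) ∘ (Δ ⊗ ρ)` is coassociative with counit `ε`. -/
theorem statement13 {C : Type*} [Category C] [MonoidalCategory C] [BraidedCategory C]
    (F : C) (m : F ⊗ F ⟶ F) (η : 𝟙_ C ⟶ F) (Δ : F ⟶ F ⊗ F) (ε : F ⟶ 𝟙_ C)
    (hF : IsBialgebraIn F m η Δ ε)
    (ρ : 𝟙_ C ⟶ F ⊗ F) :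
    ∀ Δρ : F ⟶ F ⊗ F,
      Δρ = (ρ_ F).inv ≫ (Δ ⊗ₘ ρ) ≫ exch F F F F ≫ (m ⊗ₘ m) →
      -- ρ is a normalized Drinfel'd twist
      (ρ ≫ (Δρ ▷ F) = ρ ≫ (F ◁ Δρ) ≫ (α_ F F F).inv) →
      (ρ ≫ (ε ▷ F) ≫ (λ_ F).hom = η) →
      (ρ ≫ (F ◁ ε) ≫ (ρ_ F).hom = η) →
      -- conclusion: Δ_ρ is coassociative and counital
      (Δρ ≫ (Δρ ▷ F) = Δρ ≫ (F ◁ Δρ) ≫ (α_ F F F).inv ∧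
       Δρ ≫ (ε ▷ F) ≫ (λ_ F).hom = 𝟙 F ∧
       Δρ ≫ (F ◁ ε) ≫ (ρ_ F).hom = 𝟙 F) := by
  let := hF.monObj
  have := hF.isMonHom_comul
  have := hF.isMonHom_counit
  have ⟨_, _, _, coassoc, counit_left, counit_right, _⟩ := hF
  rintro Δρ hΔρ twist twist_counit_left twist_counit_right
  obtain rfl : Δρ = Δ ≫ MonObj.rightMul ρ :=
    hΔρ.trans (MonObj.rightUnitor_inv_comp_tensorHom_comp_exch Δ ρ)
  exact ⟨MonObj.comp_rightMul_coassoc Δ coassoc ρ twist,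
    MonObj.comp_rightMul_comp_eq_id ρ counit_left twist_counit_left,
    MonObj.comp_rightMul_comp_eq_id ρ counit_right twist_counit_right⟩
end

section
/- Let C be a monoidal category, B an object with a bimonad datum (monoid (m,η), comonoid (Δ,ε), ε∘m = ε⊗ε, Δ∘η = η⊗η, ε∘η = id_𝟙), F an object and ψ : B⊗F → F⊗B a morphism with ψ∘(η⊗id_F) = id_F⊗η. Let μ_M : F⊗F → F⊗B, and suppose Δ_M : F → F⊗F⊗B and λ_M : F⊗F → F⊗F⊗B are canonical: Δ_M = Δ̃⊗η and λ_M = λ̃⊗η, where Δ̃ : F → F⊗F satisfies (id_F⊗ε̃)∘Δ̃ = id_F for some ε̃ : F → 𝟙. If the Δ_M–μ_M bimonad compatibility holds: (id_{F⊗F}⊗m)∘(Δ_M⊗id_B)∘μ_M = (id_{F⊗F}⊗m)∘(id_{F⊗F}⊗m⊗id_B)∘(id_F⊗μ_M⊗id_{B⊗B})∘(id_{F⊗F}⊗ψ⊗id_B)∘(λ_M⊗id_F⊗id_B)∘(id_F⊗Δ_M), then μ_M is determined by μ_M = (id_F⊗σ)∘(λ̃⊗id_F)∘(id_F⊗Δ̃),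 where σ := (ε̃⊗id_B)∘μ_M : F⊗F → B. -/
open CategoryTheory MonoidalCategory

/-!
Canonicity means that `Δ_M` and `λ_M` only insert units `η`. Each of them is absorbed by one of
the multiplications `m` of the compatibility: the one from `Δ_M` directly, the one from `λ_M`
after `ψ` has carried it past `F` (as `ψ ∘ (η ⊗ id_F) = id_F ⊗ η`). The compatibility thus
collapses to `(Δ̃ ⊗ id_B) ∘ μ_M = (id_F ⊗ μ_M) ∘ (λ̃ ⊗ id_F) ∘ (id_F ⊗ Δ̃)`, and applying `ε̃` to
the middle factor turns the left side into `μ_M` by counitality and `μ_M` on the right into `σ`.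
-/

section

variable {C : Type*} [Category C] [MonoidalCategory C] {B : C} {m : B ⊗ B ⟶ B} {η : 𝟙_ C ⟶ B}

namespace BimonadDatum

variable {Δ : B ⟶ B ⊗ B} {ε : B ⟶ 𝟙_ C}

theorem unit_whiskerRight_mul (hB : BimonadDatum B m η Δ ε) : η ▷ B ≫ m = (λ_ B).hom := by
  simpa using (λ_ B).hom ≫= hB.2.1

theorem whiskerLeft_unit_mul (hB : BimonadDatum B m η Δ ε) : B ◁ η ≫ m = (ρ_ B).hom := by
  simpa using (ρ_ B).hom ≫= hB.2.2.1

end BimonadDatum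

theorem whiskerRight_comp_unit_mul (hm : η ▷ B ≫ m = (λ_ B).hom) {X Y : C} (f : X ⟶ Y) :
    (f ≫ (ρ_ Y).inv ≫ Y ◁ η) ▷ B ≫ (α_ Y B B).hom ≫ Y ◁ m = f ▷ B := by
  rw [comp_whiskerRight, comp_whiskerRight, Category.assoc, Category.assoc,
    associator_naturality_middle_assoc, ← whiskerLeft_comp, hm]
  simp

theorem unit_comp_whiskerRight_mul (hm : B ◁ η ≫ m = (ρ_ B).hom) {Z W : C}
    (h : Z ⟶ W ⊗ B) :
    (ρ_ Z).inv ≫ Z ◁ η ≫ h ▷ B ≫ (α_ W B B).hom ≫ W ◁ m = h := by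
  rw [whisker_exchange_assoc, ← rightUnitor_inv_naturality_assoc,
    associator_naturality_right_assoc, ← whiskerLeft_comp, hm]
  simp

variable {F : C} {ψ : B ⊗ F ⟶ F ⊗ B}

theorem unit_whiskerRight_distrib_mul (hm : B ◁ η ≫ m = (ρ_ B).hom)
    (hψη : (η ▷ F) ≫ ψ = (λ_ F).hom ≫ (ρ_ F).inv ≫ (F ◁ η))
    {X P Q R : C} (l : X ⟶ P ⊗ Q) (μ : Q ⊗ F ⟶ R ⊗ B) :
    ((l ≫ (ρ_ (P ⊗ Q)).inv ≫ ((P ⊗ Q) ◁ η)) ▷ F) ≫ (α_ (P ⊗ Q) B F).hom ≫ ((P ⊗ Q) ◁ ψ) ≫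
      (α_ P Q (F ⊗ B)).hom ≫ (P ◁ (α_ Q F B).inv) ≫ (P ◁ (μ ▷ B)) ≫ (P ◁ (α_ R B B).hom) ≫
      (P ◁ (R ◁ m)) = l ▷ F ≫ (α_ P Q F).hom ≫ P ◁ μ := by
  calc _ = l ▷ F ≫ (α_ P Q F).hom ≫ P ◁ ((ρ_ (Q ⊗ F)).inv ≫ (Q ⊗ F) ◁ η ≫ μ ▷ B ≫
        (α_ R B B).hom ≫ R ◁ m) := by
          rw [comp_whiskerRight, comp_whiskerRight, Category.assoc, Category.assoc,
            associator_naturality_middle_assoc, ← whiskerLeft_comp_assoc, hψη]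
          monoidal
    _ = l ▷ F ≫ (α_ P Q F).hom ≫ P ◁ μ := by
          rw [unit_comp_whiskerRight_mul hm]

theorem compatibility_rhs_of_canonical (hm : B ◁ η ≫ m = (ρ_ B).hom)
    (hψη : (η ▷ F) ≫ ψ = (λ_ F).hom ≫ (ρ_ F).inv ≫ (F ◁ η))
    (μM : F ⊗ F ⟶ F ⊗ B) (Δt : F ⟶ F ⊗ F) (lt : F ⊗ F ⟶ F ⊗ F) :
    (F ◁ (Δt ≫ (ρ_ (F ⊗ F)).inv ≫ ((F ⊗ F) ◁ η))) ≫ (α_ F (F ⊗ F) B).inv ≫ ((α_ F F F).inv ▷ B) ≫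
        (((lt ≫ (ρ_ (F ⊗ F)).inv ≫ ((F ⊗ F) ◁ η)) ▷ F) ▷ B) ≫ ((α_ (F ⊗ F) B F).hom ▷ B) ≫
        (((F ⊗ F) ◁ ψ) ▷ B) ≫
        ((α_ F F (F ⊗ B)).hom ▷ B) ≫ ((F ◁ (α_ F F B).inv) ▷ B) ≫
        ((F ◁ (μM ▷ B)) ▷ B) ≫ ((F ◁ (α_ F B B).hom) ▷ B) ≫ ((F ◁ (F ◁ m)) ▷ B) ≫
        (α_ F (F ⊗ B) B).hom ≫ (F ◁ (α_ F B B).hom) ≫ (F ◁ (F ◁ m)) ≫ (α_ F F B).inv =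
      (F ◁ Δt ≫ (α_ F F F).inv ≫ lt ▷ F ≫ (α_ F F F).hom) ≫ F ◁ μM ≫ (α_ F F B).inv := by
  simp only [← comp_whiskerRight_assoc, unit_whiskerRight_distrib_mul hm hψη]
  calc _ = F ◁ Δt ≫ (ρ_ (F ⊗ (F ⊗ F))).inv ≫ (F ⊗ (F ⊗ F)) ◁ η ≫
        ((α_ F F F).inv ≫ lt ▷ F ≫ (α_ F F F).hom ≫ F ◁ μM ≫ (α_ F F B).inv) ▷ B ≫
        (α_ (F ⊗ F) B B).hom ≫ (F ⊗ F) ◁ m := by monoidal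
    _ = _ := by simp only [unit_comp_whiskerRight_mul hm, Category.assoc]

theorem eq_whiskerLeft_of_comp_whiskerRight_eq {F G X Y : C} {d : F ⟶ F ⊗ G} {e : G ⟶ 𝟙_ C}
    (hcount : d ≫ (F ◁ e) ≫ (ρ_ F).hom = 𝟙 F) {μ : X ⟶ F ⊗ B} {k : X ⟶ F ⊗ Y}
    {ν : Y ⟶ G ⊗ B} (h : μ ≫ d ▷ B = k ≫ F ◁ ν ≫ (α_ F G B).inv) :
    μ = k ≫ F ◁ (ν ≫ e ▷ B ≫ (λ_ B).hom) :=
  calc μ = μ ≫ (d ≫ (F ◁ e) ≫ (ρ_ F).hom) ▷ B := by rw [hcount, id_whiskerRight, Category.comp_id]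
    _ = k ≫ F ◁ ν ≫ (α_ F G B).inv ≫ (F ◁ e) ▷ B ≫ (ρ_ F).hom ▷ B := by
      rw [comp_whiskerRight, reassoc_of% h, comp_whiskerRight]
    _ = k ≫ F ◁ (ν ≫ e ▷ B ≫ (λ_ B).hom) := by monoidal

end

/-- In a biwreath in which `Δ_M` and `λ_M` are canonical, the
`Δ_M`–`μ_M` bimonad compatibility determines `μ_M`:
`μ_M = (id_F ⊗ σ) ∘ (λ̃ ⊗ id_F) ∘ (id_F ⊗ Δ̃)` with `σ := (ε̃ ⊗ id_B) ∘ μ_M`. -/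
theorem statement15 {C : Type*} [Category C] [MonoidalCategory C]
    (B F : C) (m : B ⊗ B ⟶ B) (η : 𝟙_ C ⟶ B) (Δ : B ⟶ B ⊗ B) (ε : B ⟶ 𝟙_ C)
    (hB : BimonadDatum B m η Δ ε)
    (ψ : B ⊗ F ⟶ F ⊗ B)
    (hψη : (η ▷ F) ≫ ψ = (λ_ F).hom ≫ (ρ_ F).inv ≫ (F ◁ η))
    (μM : F ⊗ F ⟶ F ⊗ B)
    (ΔM : F ⟶ (F ⊗ F) ⊗ B) (lM : F ⊗ F ⟶ (F ⊗ F) ⊗ B)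
    (Δt : F ⟶ F ⊗ F) (lt : F ⊗ F ⟶ F ⊗ F) (εt : F ⟶ 𝟙_ C)
    -- Δ̃ is counital via ε̃
    (hcount : Δt ≫ (F ◁ εt) ≫ (ρ_ F).hom = 𝟙 F)
    -- canonicity of Δ_M and λ_M
    (hΔM : ΔM = Δt ≫ (ρ_ (F ⊗ F)).inv ≫ ((F ⊗ F) ◁ η))
    (hlM : lM = lt ≫ (ρ_ (F ⊗ F)).inv ≫ ((F ⊗ F) ◁ η))
    -- the Δ_M–μ_M bimonad compatibility
    (hE8 : μM ≫ (ΔM ▷ B) ≫ (α_ (F ⊗ F) B B).hom ≫ ((F ⊗ F) ◁ m) =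
      (F ◁ ΔM) ≫ (α_ F (F ⊗ F) B).inv ≫ ((α_ F F F).inv ▷ B) ≫
        ((lM ▷ F) ▷ B) ≫ ((α_ (F ⊗ F) B F).hom ▷ B) ≫ (((F ⊗ F) ◁ ψ) ▷ B) ≫
        ((α_ F F (F ⊗ B)).hom ▷ B) ≫ ((F ◁ (α_ F F B).inv) ▷ B) ≫
        ((F ◁ (μM ▷ B)) ▷ B) ≫ ((F ◁ (α_ F B B).hom) ▷ B) ≫ ((F ◁ (F ◁ m)) ▷ B) ≫
        (α_ F (F ⊗ B) B).hom ≫ (F ◁ (α_ F B B).hom) ≫ (F ◁ (F ◁ m)) ≫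
        (α_ F F B).inv) :
    ∀ σ : F ⊗ F ⟶ B, σ = μM ≫ (εt ▷ B) ≫ (λ_ B).hom →
      μM = (F ◁ Δt) ≫ (α_ F F F).inv ≫ (lt ▷ F) ≫ (α_ F F F).hom ≫ (F ◁ σ) := by
  rintro σ rfl
  subst hΔM hlM
  rw [whiskerRight_comp_unit_mul hB.unit_whiskerRight_mul,
    compatibility_rhs_of_canonical hB.whiskerLeft_unit_mul hψη] at hE8
  simpa only [Category.assoc] using eq_whiskerLeft_of_comp_whiskerRight_eq hcount hE8
end

section
/- Let C be a monoidal category, B an object with a bimonad datum (monoid (m,η), comonoid (Δ,ε), ε∘m = ε⊗ε, Δ∘η = η⊗η, ε∘η = id_𝟙), F an object and ψ : B⊗F → F⊗B a morphism with ψ∘(η⊗id_F) = id_F⊗η. Let Δ_M : F → F⊗F⊗B, and suppose μ_M : F⊗F → F⊗B and λ_M : F⊗F → F⊗F⊗B are canonical: μ_M = μ̃⊗η and λ_M = λ̃⊗η, where μ̃ : F⊗F → F satisfies μ̃∘(id_F⊗η̃) = id_F for some η̃ : 𝟙 → F. If the Δ_M–μ_M bimonad compatibility holds: (id_{F⊗F}⊗m)∘(Δ_M⊗id_B)∘μ_M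 = (id_{F⊗F}⊗m)∘(id_{F⊗F}⊗m⊗id_B)∘(id_F⊗μ_M⊗id_{B⊗B})∘(id_{F⊗F}⊗ψ⊗id_B)∘(λ_M⊗id_F⊗id_B)∘(id_F⊗Δ_M), then Δ_M is determined by Δ_M = (id_F⊗μ̃⊗id_B)∘(λ̃⊗id_F⊗id_B)∘(id_F⊗Φ_λ), where Φ_λ := Δ_M∘η̃ : 𝟙 → F⊗F⊗B. -/
/-!
Precompose the compatibility with `id_F ⊗ η̃`. On the left, `μ̃ ∘ (id_F ⊗ η̃) = id_F` leaves
`Δ_M ⊗ η` followed by `m`, which is `Δ_M` by the right unit law of `m`. On the right, `Δ_M ∘ η̃`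
becomes `Φ_λ`, and every copy of `η` produced by the canonical `λ_M` and `μ_M` is either pushed
through `ψ` (using `ψ ∘ (η ⊗ id_F) = id_F ⊗ η`) or absorbed directly by `m` through its unit laws,
leaving `(id_F ⊗ μ̃ ⊗ id_B) ∘ (λ̃ ⊗ id_F ⊗ id_B) ∘ (id_F ⊗ Φ_λ)`.
-/

open CategoryTheory MonoidalCategory

namespace CategoryTheory.MonoidalCategory

variable {C : Type*} [Category C] [MonoidalCategory C] {B : C} (η : 𝟙_ C ⟶ B)

/-- The paper's canonical morphisms `f ⊗ η` are the composites `f ≫ unitInsertion η Y`. -/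
def unitInsertion (X : C) : X ⟶ X ⊗ B := (ρ_ X).inv ≫ (X ◁ η)

variable {η}

theorem comp_unitInsertion {X Y : C} (f : X ⟶ Y) :
    f ≫ unitInsertion η Y = unitInsertion η X ≫ (f ▷ B) := by
  rw [unitInsertion, rightUnitor_inv_naturality_assoc, ← whisker_exchange, unitInsertion,
    Category.assoc]

theorem whiskerLeft_unitInsertion_comp_associator_inv (X Y : C) :
    (X ◁ unitInsertion η Y) ≫ (α_ X Y B).inv = unitInsertion η (X ⊗ Y) := by
  simp only [unitInsertion]
  monoidal

section Multiplication

variable {m : B ⊗ B ⟶ B}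

theorem unitInsertion_comp_whiskerRight_mul (hru : (ρ_ B).inv ≫ (B ◁ η) ≫ m = 𝟙 B)
    {X Y : C} (h : X ⟶ Y ⊗ B) :
    unitInsertion η X ≫ (h ▷ B) ≫ (α_ Y B B).hom ≫ (Y ◁ m) = h := by
  have hY : unitInsertion η (Y ⊗ B) ≫ (α_ Y B B).hom = Y ◁ unitInsertion η B := by
    simp only [unitInsertion]
    monoidal
  rw [← reassoc_of% comp_unitInsertion, reassoc_of% hY, ← whiskerLeft_comp, unitInsertion,
    Category.assoc, hru, whiskerLeft_id, Category.comp_id]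

theorem unitInsertion_whiskerRight_mul (hlu : (λ_ B).inv ≫ (η ▷ B) ≫ m = 𝟙 B) (Y : C) :
    (unitInsertion η Y ▷ B) ≫ (α_ Y B B).hom ≫ (Y ◁ m) = 𝟙 (Y ⊗ B) := by
  have hη : (η ▷ B) ≫ m = (λ_ B).hom := by
    rw [← Category.id_comp (η ▷ B ≫ m), ← Iso.hom_inv_id (λ_ B), Category.assoc, hlu,
      Category.comp_id]
  rw [unitInsertion, comp_whiskerRight, Category.assoc, associator_naturality_middle_assoc,
    ← whiskerLeft_comp, hη]
  monoidal

end Multiplication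

section Transport

variable {F : C} {m : B ⊗ B ⟶ B} {ψ : B ⊗ F ⟶ F ⊗ B}

theorem unitInsertion_whiskerRight_hom_whiskerLeft
    (hψη : (η ▷ F) ≫ ψ = (λ_ F).hom ≫ (ρ_ F).inv ≫ (F ◁ η)) (Y : C) :
    (unitInsertion η Y ▷ F) ≫ (α_ Y B F).hom ≫ (Y ◁ ψ) = Y ◁ unitInsertion η F := by
  rw [unitInsertion, comp_whiskerRight, Category.assoc, associator_naturality_middle_assoc,
    ← whiskerLeft_comp, hψη, whiskerLeft_comp]
  have triangle : ((ρ_ Y).inv ▷ F) ≫ (α_ Y (𝟙_ C) F).hom ≫ (Y ◁ (λ_ F).hom) = 𝟙 (Y ⊗ F) := by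
    monoidal
  rw [reassoc_of% triangle, unitInsertion]

theorem unitInsertion_whiskerRight_transport_mul (hru : (ρ_ B).inv ≫ (B ◁ η) ≫ m = 𝟙 B)
    (hψη : (η ▷ F) ≫ ψ = (λ_ F).hom ≫ (ρ_ F).inv ≫ (F ◁ η)) {X Y Z : C} (μ : Y ⊗ F ⟶ Z) :
    (unitInsertion η (X ⊗ Y) ▷ F) ≫ (α_ (X ⊗ Y) B F).hom ≫ ((X ⊗ Y) ◁ ψ) ≫
      (α_ X Y (F ⊗ B)).hom ≫ (X ◁ (α_ Y F B).inv) ≫ (X ◁ ((μ ≫ unitInsertion η Z) ▷ B)) ≫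
      (X ◁ (α_ Z B B).hom) ≫ (X ◁ (Z ◁ m)) =
    (α_ X Y F).hom ≫ (X ◁ (μ ≫ unitInsertion η Z)) := by
  rw [reassoc_of% unitInsertion_whiskerRight_hom_whiskerLeft hψη, associator_naturality_right_assoc]
  simp only [← whiskerLeft_comp]
  rw [reassoc_of% whiskerLeft_unitInsertion_comp_associator_inv,
    unitInsertion_comp_whiskerRight_mul hru]

theorem whiskerLeft_unitInsertion_whiskerRight_mul (hlu : (λ_ B).inv ≫ (η ▷ B) ≫ m = 𝟙 B)
    (X Z : C) :
    ((X ◁ unitInsertion η Z) ▷ B) ≫ (α_ X (Z ⊗ B) B).hom ≫ (X ◁ (α_ Z B B).hom) ≫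
      (X ◁ (Z ◁ m)) ≫ (α_ X Z B).inv = 𝟙 _ := by
  rw [associator_naturality_middle_assoc]
  simp only [← whiskerLeft_comp_assoc]
  rw [unitInsertion_whiskerRight_mul hlu, whiskerLeft_id, Category.id_comp, Iso.hom_inv_id]

theorem canonical_compatibility_tail_eq (hlu : (λ_ B).inv ≫ (η ▷ B) ≫ m = 𝟙 B)
    (hru : (ρ_ B).inv ≫ (B ◁ η) ≫ m = 𝟙 B)
    (hψη : (η ▷ F) ≫ ψ = (λ_ F).hom ≫ (ρ_ F).inv ≫ (F ◁ η))
    {W X Y Z : C} (l : W ⟶ X ⊗ Y) (μ : Y ⊗ F ⟶ Z) :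
    (((l ≫ unitInsertion η (X ⊗ Y)) ▷ F) ▷ B) ≫ ((α_ (X ⊗ Y) B F).hom ▷ B) ≫
      (((X ⊗ Y) ◁ ψ) ▷ B) ≫ ((α_ X Y (F ⊗ B)).hom ▷ B) ≫ ((X ◁ (α_ Y F B).inv) ▷ B) ≫
      ((X ◁ ((μ ≫ unitInsertion η Z) ▷ B)) ▷ B) ≫ ((X ◁ (α_ Z B B).hom) ▷ B) ≫
      ((X ◁ (Z ◁ m)) ▷ B) ≫ (α_ X (Z ⊗ B) B).hom ≫ (X ◁ (α_ Z B B).hom) ≫ (X ◁ (Z ◁ m)) ≫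
      (α_ X Z B).inv =
    ((l ▷ F) ▷ B) ≫ ((α_ X Y F).hom ▷ B) ≫ ((X ◁ μ) ▷ B) := by
  simp only [← comp_whiskerRight_assoc]
  rw [comp_whiskerRight l, Category.assoc, unitInsertion_whiskerRight_transport_mul hru hψη]
  simp only [whiskerLeft_comp, comp_whiskerRight, Category.assoc]
  rw [whiskerLeft_unitInsertion_whiskerRight_mul hlu, Category.comp_id]

end Transport

end CategoryTheory.MonoidalCategory

/-- In a biwreath in which `μ_M` and `λ_M` are canonical, the
`Δ_M`–`μ_M` bimonad compatibility determines `Δ_M`: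
`Δ_M = (id_F ⊗ μ̃ ⊗ id_B) ∘ (λ̃ ⊗ id_F ⊗ id_B) ∘ (id_F ⊗ Φ_λ)` with
`Φ_λ := Δ_M ∘ η̃`. -/
theorem statement16 {C : Type*} [Category C] [MonoidalCategory C]
    (B F : C) (m : B ⊗ B ⟶ B) (η : 𝟙_ C ⟶ B) (Δ : B ⟶ B ⊗ B) (ε : B ⟶ 𝟙_ C)
    (hB : BimonadDatum B m η Δ ε)
    (ψ : B ⊗ F ⟶ F ⊗ B)
    (hψη : (η ▷ F) ≫ ψ = (λ_ F).hom ≫ (ρ_ F).inv ≫ (F ◁ η))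
    (ΔM : F ⟶ (F ⊗ F) ⊗ B)
    (μM : F ⊗ F ⟶ F ⊗ B) (lM : F ⊗ F ⟶ (F ⊗ F) ⊗ B)
    (μt : F ⊗ F ⟶ F) (lt : F ⊗ F ⟶ F ⊗ F) (ηt : 𝟙_ C ⟶ F)
    -- μ̃ is unital via η̃
    (hunit : (ρ_ F).inv ≫ (F ◁ ηt) ≫ μt = 𝟙 F)
    -- canonicity of μ_M and λ_M
    (hμM : μM = μt ≫ (ρ_ F).inv ≫ (F ◁ η))
    (hlM : lM = lt ≫ (ρ_ (F ⊗ F)).inv ≫ ((F ⊗ F) ◁ η))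
    -- the Δ_M–μ_M bimonad compatibility
    (hE8 : μM ≫ (ΔM ▷ B) ≫ (α_ (F ⊗ F) B B).hom ≫ ((F ⊗ F) ◁ m) =
      (F ◁ ΔM) ≫ (α_ F (F ⊗ F) B).inv ≫ ((α_ F F F).inv ▷ B) ≫
        ((lM ▷ F) ▷ B) ≫ ((α_ (F ⊗ F) B F).hom ▷ B) ≫ (((F ⊗ F) ◁ ψ) ▷ B) ≫
        ((α_ F F (F ⊗ B)).hom ▷ B) ≫ ((F ◁ (α_ F F B).inv) ▷ B) ≫
        ((F ◁ (μM ▷ B)) ▷ B) ≫ ((F ◁ (α_ F B B).hom) ▷ B) ≫ ((F ◁ (F ◁ m)) ▷ B) ≫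
        (α_ F (F ⊗ B) B).hom ≫ (F ◁ (α_ F B B).hom) ≫ (F ◁ (F ◁ m)) ≫
        (α_ F F B).inv) :
    ∀ Φ : 𝟙_ C ⟶ (F ⊗ F) ⊗ B, Φ = ηt ≫ ΔM →
      ΔM = (ρ_ F).inv ≫ (F ◁ Φ) ≫ (α_ F (F ⊗ F) B).inv ≫ ((α_ F F F).inv ▷ B) ≫
        ((lt ▷ F) ▷ B) ≫ ((α_ F F F).hom ▷ B) ≫ ((F ◁ μt) ▷ B) := by
  intro Φ hΦ
  change μM = μt ≫ unitInsertion η F at hμM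
  change lM = lt ≫ unitInsertion η (F ⊗ F) at hlM
  subst hμM hlM hΦ
  calc ΔM = unitInsertion η F ≫ (ΔM ▷ B) ≫ (α_ (F ⊗ F) B B).hom ≫ ((F ⊗ F) ◁ m) :=
        (unitInsertion_comp_whiskerRight_mul hB.2.2.1 ΔM).symm
    _ = ((ρ_ F).inv ≫ (F ◁ ηt) ≫ μt) ≫ unitInsertion η F ≫ (ΔM ▷ B) ≫
          (α_ (F ⊗ F) B B).hom ≫ ((F ⊗ F) ◁ m) := by
        rw [hunit, Category.id_comp]
    _ = _ := by
        simp only [Category.assoc] at hE8 ⊢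
        rw [hE8, ← whiskerLeft_comp_assoc, canonical_compatibility_tail_eq hB.2.1 hB.2.2.1 hψη]
end

section
/- Let C be a monoidal category, B an object with a bimonad datum (monoid (m,η), comonoid (Δ,ε), ε∘m = ε⊗ε, Δ∘η = η⊗η, ε∘η = id_𝟙), and F an object equipped with morphisms μ_M : F⊗F → F⊗B, Δ_C : F⊗B → F⊗F, λ : F⊗F → F⊗F, μ̃ := (id_F⊗ε)∘μ_M : F⊗F → F, Δ̃ := Δ_C∘(id_F⊗η) : F → F⊗F, η̃ : 𝟙 → F and ε̃ : F → 𝟙, such that μ̃∘(id_F⊗η̃) = id_F, (id_F⊗ε̃)∘Δ̃ = id_F, and the two compatibility conditions of a biwreath-like object hold: (Δ̃⊗id_B)∘μ_M = (id_F⊗μ_M)∘(λ⊗id_F)∘(id_F⊗Δ̃) and Δ_C∘(μ̃⊗id_B) = (id_F⊗μ̃)∘(λ⊗id_F)∘(id_F⊗Δ_C). Then: (i) Δ̃∘μ̃ = (id_F⊗μ̃)∘(λ⊗id_F)∘(id_F⊗Δ̃) (so F carries the bimonad compatibility of a λ-twisted bialgebra in C); (ii) μ_M is the σ-twisted multiplication: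 μ_M = (id_F⊗σ)∘(λ⊗id_F)∘(id_F⊗Δ̃) with σ := (ε̃⊗id_B)∘μ_M; (iii) Δ_C is the ρ-twisted comultiplication: Δ_C = (id_F⊗μ̃)∘(λ⊗id_F)∘(id_F⊗ρ) with ρ := Δ_C∘(η̃⊗id_B). -/
/-!
Each identity is one of the two compatibility conditions with a unit or counit plugged into
a free leg.  Feeding `η` into the `B`-leg of the `Δ_C`-condition turns `Δ_C` into `Δ̃` and
gives (i); feeding `η̃` into the first leg and cancelling it with the unitality of `μ̃` gives
(iii); dually, applying `ε̃` to the `μ_M`-condition and cancelling it with the counitality of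
`Δ̃` gives (ii).
-/

open CategoryTheory MonoidalCategory

namespace CategoryTheory.MonoidalCategory

variable {C : Type*} [Category C] [MonoidalCategory C]

lemma comp_rightUnitor_inv_whiskerLeft_comp_eq_of_whiskerRight_comp_eq {F G H B W Z : C}
    {μ : F ⊗ G ⟶ H} {g : H ⊗ B ⟶ Z} {g' : G ⊗ B ⟶ W} {t : F ⊗ W ⟶ Z}
    (h : μ ▷ B ≫ g = (α_ F G B).hom ≫ F ◁ g' ≫ t) (b : 𝟙_ C ⟶ B) :
    μ ≫ (ρ_ H).inv ≫ H ◁ b ≫ g = F ◁ ((ρ_ G).inv ≫ G ◁ b ≫ g') ≫ t := by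
  calc μ ≫ (ρ_ H).inv ≫ H ◁ b ≫ g = (ρ_ (F ⊗ G)).inv ≫ (F ⊗ G) ◁ b ≫ μ ▷ B ≫ g := by
        rw [rightUnitor_inv_naturality_assoc, whisker_exchange_assoc]
    _ = (ρ_ (F ⊗ G)).inv ≫ (F ⊗ G) ◁ b ≫ (α_ F G B).hom ≫ F ◁ g' ≫ t := by rw [h]
    _ = F ◁ ((ρ_ G).inv ≫ G ◁ b ≫ g') ≫ t := by
        rw [associator_naturality_right_assoc]; simp

lemma eq_whiskerLeft_comp_of_whiskerRight_comp_eq {F G B W Z : C} {μ : F ⊗ G ⟶ F}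
    {g : F ⊗ B ⟶ Z} {g' : G ⊗ B ⟶ W} {t : F ⊗ W ⟶ Z}
    (h : μ ▷ B ≫ g = (α_ F G B).hom ≫ F ◁ g' ≫ t) {u : 𝟙_ C ⟶ G}
    (hu : (ρ_ F).inv ≫ F ◁ u ≫ μ = 𝟙 F) :
    g = F ◁ ((λ_ B).inv ≫ u ▷ B ≫ g') ≫ t := by
  have hu' : (ρ_ F).inv ▷ B ≫ (F ◁ u) ▷ B ≫ μ ▷ B = 𝟙 (F ⊗ B) := by
    simp only [← comp_whiskerRight, hu, id_whiskerRight]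
  calc g = (ρ_ F).inv ▷ B ≫ (F ◁ u) ▷ B ≫ μ ▷ B ≫ g := by rw [reassoc_of% hu']
    _ = (ρ_ F).inv ▷ B ≫ (F ◁ u) ▷ B ≫ (α_ F G B).hom ≫ F ◁ g' ≫ t := by rw [h]
    _ = F ◁ ((λ_ B).inv ≫ u ▷ B ≫ g') ≫ t := by
        rw [associator_naturality_middle_assoc]; simp

lemma eq_comp_whiskerLeft_of_comp_whiskerRight_eq {F G B X Y : C} {f : X ⟶ F ⊗ B}
    {d : F ⟶ F ⊗ G} {f' : Y ⟶ G ⊗ B} {s : X ⟶ F ⊗ Y}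
    (h : f ≫ d ▷ B = s ≫ F ◁ f' ≫ (α_ F G B).inv) {e : G ⟶ 𝟙_ C}
    (he : d ≫ F ◁ e ≫ (ρ_ F).hom = 𝟙 F) :
    f = s ≫ F ◁ (f' ≫ e ▷ B ≫ (λ_ B).hom) := by
  have he' : d ▷ B ≫ (F ◁ e) ▷ B ≫ (ρ_ F).hom ▷ B = 𝟙 (F ⊗ B) := by
    simp only [← comp_whiskerRight, he, id_whiskerRight]
  calc f = f ≫ d ▷ B ≫ (F ◁ e) ▷ B ≫ (ρ_ F).hom ▷ B := by rw [he', Category.comp_id]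
    _ = s ≫ F ◁ f' ≫ (α_ F G B).inv ≫ (F ◁ e) ▷ B ≫ (ρ_ F).hom ▷ B := by
        rw [reassoc_of% h]
    _ = s ≫ F ◁ (f' ≫ e ▷ B ≫ (λ_ B).hom) := by
        rw [← associator_inv_naturality_middle_assoc]; simp

end CategoryTheory.MonoidalCategory

theorem statement17_general {C : Type*} [Category C] [MonoidalCategory C]
    (B F : C) (η : 𝟙_ C ⟶ B)
    (μM : F ⊗ F ⟶ F ⊗ B) (ΔC : F ⊗ B ⟶ F ⊗ F) (lam : F ⊗ F ⟶ F ⊗ F)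
    (μt : F ⊗ F ⟶ F) (Δt : F ⟶ F ⊗ F) (ηt : 𝟙_ C ⟶ F) (εt : F ⟶ 𝟙_ C)
    -- the canonical restrictions of μ_M and Δ_C
    (hΔt : Δt = (ρ_ F).inv ≫ (F ◁ η) ≫ ΔC)
    -- unitality and counitality
    (hunit : (ρ_ F).inv ≫ (F ◁ ηt) ≫ μt = 𝟙 F)
    (hcount : Δt ≫ (F ◁ εt) ≫ (ρ_ F).hom = 𝟙 F)
    -- the compatibility of λ with μ_M
    (hcomp1 : μM ≫ (Δt ▷ B) =
      (F ◁ Δt) ≫ (α_ F F F).inv ≫ (lam ▷ F) ≫ (α_ F F F).hom ≫ (F ◁ μM) ≫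
        (α_ F F B).inv)
    -- the compatibility of λ with Δ_C
    (hcomp2 : (μt ▷ B) ≫ ΔC =
      (α_ F F B).hom ≫ (F ◁ ΔC) ≫ (α_ F F F).inv ≫ (lam ▷ F) ≫
        (α_ F F F).hom ≫ (F ◁ μt)) :
    -- (i) the λ-twisted bialgebra compatibility
    (μt ≫ Δt =
      (F ◁ Δt) ≫ (α_ F F F).inv ≫ (lam ▷ F) ≫ (α_ F F F).hom ≫ (F ◁ μt)) ∧
    -- (ii) μ_M is the σ-twisted multiplication
    (∀ σ : F ⊗ F ⟶ B, σ = μM ≫ (εt ▷ B) ≫ (λ_ B).hom →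
      μM = (F ◁ Δt) ≫ (α_ F F F).inv ≫ (lam ▷ F) ≫ (α_ F F F).hom ≫ (F ◁ σ)) ∧
    -- (iii) Δ_C is the ρ-twisted comultiplication
    (∀ r : B ⟶ F ⊗ F, r = (λ_ B).inv ≫ (ηt ▷ B) ≫ ΔC →
      ΔC = (F ◁ r) ≫ (α_ F F F).inv ≫ (lam ▷ F) ≫ (α_ F F F).hom ≫ (F ◁ μt)) := by
  refine ⟨?_, fun σ hσ => ?_, fun r hr => ?_⟩
  · rw [hΔt]
    exact comp_rightUnitor_inv_whiskerLeft_comp_eq_of_whiskerRight_comp_eq hcomp2 η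
  · have hcomp1' : μM ≫ Δt ▷ B = ((F ◁ Δt) ≫ (α_ F F F).inv ≫ (lam ▷ F) ≫ (α_ F F F).hom) ≫
        F ◁ μM ≫ (α_ F F B).inv := by
      simpa only [Category.assoc] using hcomp1
    simpa only [Category.assoc, ← hσ] using
      eq_comp_whiskerLeft_of_comp_whiskerRight_eq hcomp1' hcount
  · rw [hr]
    exact eq_whiskerLeft_comp_of_whiskerRight_comp_eq hcomp2 hunit

/-- In a biwreath-like object, the two compatibility conditions
relating `λ` with `μ_M` and `Δ_C` imply: (i) the `λ`-twisted bialgebra compatibility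
for the canonical restrictions `μ̃`, `Δ̃`; (ii) `μ_M` is the `σ`-twisted multiplication;
(iii) `Δ_C` is the `ρ`-twisted comultiplication. -/
theorem statement17 {C : Type*} [Category C] [MonoidalCategory C]
    (B F : C) (m : B ⊗ B ⟶ B) (η : 𝟙_ C ⟶ B) (Δ : B ⟶ B ⊗ B) (ε : B ⟶ 𝟙_ C)
    (hB : BimonadDatum B m η Δ ε)
    (μM : F ⊗ F ⟶ F ⊗ B) (ΔC : F ⊗ B ⟶ F ⊗ F) (lam : F ⊗ F ⟶ F ⊗ F)
    (μt : F ⊗ F ⟶ F) (Δt : F ⟶ F ⊗ F) (ηt : 𝟙_ C ⟶ F) (εt : F ⟶ 𝟙_ C)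
    -- the canonical restrictions of μ_M and Δ_C
    (hμt : μt = μM ≫ (F ◁ ε) ≫ (ρ_ F).hom)
    (hΔt : Δt = (ρ_ F).inv ≫ (F ◁ η) ≫ ΔC)
    -- unitality and counitality
    (hunit : (ρ_ F).inv ≫ (F ◁ ηt) ≫ μt = 𝟙 F)
    (hcount : Δt ≫ (F ◁ εt) ≫ (ρ_ F).hom = 𝟙 F)
    -- the compatibility of λ with μ_M
    (hcomp1 : μM ≫ (Δt ▷ B) =
      (F ◁ Δt) ≫ (α_ F F F).inv ≫ (lam ▷ F) ≫ (α_ F F F).hom ≫ (F ◁ μM) ≫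
        (α_ F F B).inv)
    -- the compatibility of λ with Δ_C
    (hcomp2 : (μt ▷ B) ≫ ΔC =
      (α_ F F B).hom ≫ (F ◁ ΔC) ≫ (α_ F F F).inv ≫ (lam ▷ F) ≫
        (α_ F F F).hom ≫ (F ◁ μt)) :
    -- (i) the λ-twisted bialgebra compatibility
    (μt ≫ Δt =
      (F ◁ Δt) ≫ (α_ F F F).inv ≫ (lam ▷ F) ≫ (α_ F F F).hom ≫ (F ◁ μt)) ∧
    -- (ii) μ_M is the σ-twisted multiplication
    (∀ σ : F ⊗ F ⟶ B, σ = μM ≫ (εt ▷ B) ≫ (λ_ B).hom →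
      μM = (F ◁ Δt) ≫ (α_ F F F).inv ≫ (lam ▷ F) ≫ (α_ F F F).hom ≫ (F ◁ σ)) ∧
    -- (iii) Δ_C is the ρ-twisted comultiplication
    (∀ r : B ⟶ F ⊗ F, r = (λ_ B).inv ≫ (ηt ▷ B) ≫ ΔC →
      ΔC = (F ◁ r) ≫ (α_ F F F).inv ≫ (lam ▷ F) ≫ (α_ F F F).hom ≫ (F ◁ μt)) :=
  statement17_general B F η μM ΔC lam μt Δt ηt εt hΔt hunit hcount hcomp1 hcomp2
end
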